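/- arXiv:2111.12252 — 13 statements merged into one kernel-verified Lean document; each statement's English description precedes it below -/
import Mathlib

section
/- Let m, n ∈ ℕ, let p ∈ [1, ∞], let A be a real m×n matrix, b ∈ ℝᵐ, and λ > 0. For σ > 0 and τ > 0 define f₁(σ, τ) := ⨅_{x ∈ ℝⁿ} ( ‖Ax − b‖_p + λ‖x‖₁ + (σ/2)‖x‖₂² + (τ/2)‖Ax − b‖₂² ). Then f₁(σ, τ) tends to ⨅_{x ∈ ℝⁿ} ( ‖Ax − b‖_p + λ‖x‖₁ ) as (σ, τ) → (0, 0) with σ, τ > 0; i.e., for any sequences σ_k > 0, τ_k > 0 with σ_k → 0 and τ_k → 0, the sequence f₁(σ_k, τ_k) converges to ⨅_{x ∈ ℝⁿ} ( ‖Ax − b‖_p + λ‖x‖₁ ). -/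
open Filter
open scoped ENNReal

noncomputable def lpNorm (p : ℝ≥0∞) [Fact (1 ≤ p)] {m : ℕ} (y : Fin m → ℝ) : ℝ :=
  ‖(WithLp.equiv p (Fin m → ℝ)).symm y‖

noncomputable def l2Norm {m : ℕ} (y : Fin m → ℝ) : ℝ :=
  ‖(WithLp.equiv 2 (Fin m → ℝ)).symm y‖

noncomputable def l1Norm {n : ℕ} (x : Fin n → ℝ) : ℝ := ∑ i, |x i|

/-- Theorem 3.2: the optimal value of the proximally regularized problem tends to the
optimal value of the unregularized problem as the proximal parameters tend to zero. -/
theorem stmt_0 {m n : ℕ} (p : ℝ≥0∞) [Fact (1 ≤ p)]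
    (A : Matrix (Fin m) (Fin n) ℝ) (b : Fin m → ℝ) (lam : ℝ) (hlam : 0 < lam)
    (f₁ : ℝ → ℝ → ℝ)
    (hf₁ : ∀ σ τ : ℝ, f₁ σ τ = ⨅ x : EuclideanSpace ℝ (Fin n),
      (lpNorm p (A.mulVec x - b) + lam * l1Norm x
        + σ / 2 * ‖x‖ ^ 2 + τ / 2 * l2Norm (A.mulVec x - b) ^ 2))
    (σ τ : ℕ → ℝ) (hσpos : ∀ k, 0 < σ k) (hτpos : ∀ k, 0 < τ k)
    (hσ : Tendsto σ atTop (nhds 0)) (hτ : Tendsto τ atTop (nhds 0)) :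
    Tendsto (fun k => f₁ (σ k) (τ k)) atTop
      (nhds (⨅ x : EuclideanSpace ℝ (Fin n), (lpNorm p (A.mulVec x - b) + lam * l1Norm x))) := by
  classical
  set g : EuclideanSpace ℝ (Fin n) → ℝ :=
    fun x => lpNorm p (A.mulVec x - b) + lam * l1Norm x with hgdef
  have hg0 : ∀ x, 0 ≤ g x := by
    intro x
    have h1 : 0 ≤ lpNorm p (A.mulVec x - b) := norm_nonneg _
    have h2 : 0 ≤ l1Norm (x : Fin n → ℝ) := Finset.sum_nonneg fun i _ => abs_nonneg _
    have := mul_nonneg hlam.le h2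
    simpa [hgdef] using add_nonneg h1 this
  have hbddg : BddBelow (Set.range g) := ⟨0, by rintro _ ⟨x, rfl⟩; exact hg0 x⟩
  set L : ℝ := ⨅ x, g x with hL
  -- nonneg of the extra terms
  have hterm : ∀ (s t : ℝ) (x : EuclideanSpace ℝ (Fin n)), 0 ≤ s → 0 ≤ t →
      0 ≤ s / 2 * ‖x‖ ^ 2 + t / 2 * l2Norm (A.mulVec x - b) ^ 2 := by
    intro s t x hs ht
    have : (0:ℝ) ≤ l2Norm (A.mulVec x - b) ^ 2 := sq_nonneg _
    positivity
  have hlow : ∀ k, L ≤ f₁ (σ k) (τ k) := by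
    intro k
    rw [hf₁]
    refine le_ciInf fun x => ?_
    have h1 : L ≤ g x := ciInf_le hbddg x
    have h2 := hterm (σ k) (τ k) x (hσpos k).le (hτpos k).le
    simp only [hgdef] at h1
    linarith
  rw [Metric.tendsto_atTop]
  intro ε hε
  have hLlt : L < L + ε / 2 := by linarith
  obtain ⟨x₀, hx₀⟩ := exists_lt_of_ciInf_lt hLlt
  set c : ℝ := ‖x₀‖ ^ 2 with hc
  set d : ℝ := l2Norm (A.mulVec x₀ - b) ^ 2 with hd
  have htend : Tendsto (fun k => σ k / 2 * c + τ k / 2 * d) atTop (nhds 0) := by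
    have : Tendsto (fun k => σ k / 2 * c + τ k / 2 * d) atTop
        (nhds ((0:ℝ) / 2 * c + 0 / 2 * d)) :=
      ((hσ.div_const 2).mul_const c).add ((hτ.div_const 2).mul_const d)
    simpa using this
  have hev : ∀ᶠ k in atTop, σ k / 2 * c + τ k / 2 * d < ε / 2 := by
    have := htend (Metric.ball_mem_nhds (0:ℝ) (by positivity : (0:ℝ) < ε / 2))
    filter_upwards [this] with k hk
    have := abs_lt.mp (by simpa [Real.dist_eq] using hk)
    linarith [this.2]
  obtain ⟨N, hN⟩ := hev.exists_forall_of_atTop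
  refine ⟨N, fun k hk => ?_⟩
  have hup : f₁ (σ k) (τ k) ≤ g x₀ + (σ k / 2 * c + τ k / 2 * d) := by
    rw [hf₁]
    have hbdd : BddBelow (Set.range fun x : EuclideanSpace ℝ (Fin n) =>
        lpNorm p (A.mulVec x - b) + lam * l1Norm x
          + σ k / 2 * ‖x‖ ^ 2 + τ k / 2 * l2Norm (A.mulVec x - b) ^ 2) := by
      refine ⟨0, ?_⟩
      rintro _ ⟨x, rfl⟩
      have := hg0 x
      have := hterm (σ k) (τ k) x (hσpos k).le (hτpos k).le
      simp only [hgdef] at *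
      linarith
    have := ciInf_le hbdd x₀
    simp only [hgdef]
    rw [hc, hd]
    linarith [this]
  have h1 := hlow k
  have h2 := hN k hk
  rw [Real.dist_eq, abs_lt]
  constructor <;> [linarith; linarith]
end

section
/- Let m, n ∈ ℕ, p ∈ [1, ∞], A a real m×n matrix, b ∈ ℝᵐ, λ > 0, β ≥ 0, σ > 0, τ ≥ 0. Let xᵏ, v, δ ∈ ℝⁿ satisfy ‖v‖₂ ≤ 1 and ⟨v, xᵏ⟩ = ‖xᵏ‖₂. Define F(x) := ‖Ax − b‖_p + λ‖x‖₁ − λβ⟨v, x⟩ + (σ/2)‖x − xᵏ‖₂² + (τ/2)‖A(x − xᵏ)‖₂², and define f(x) := ‖Ax − b‖_p + λ(‖x‖₁ − β‖x‖₂). Suppose x⁺ ∈ ℝⁿ is a global minimizer of x ↦ F(x) + ⟨δ, x − xᵏ⟩ and the error bound ‖δ‖₂ · ‖x⁺ − xᵏ‖₂ ≤ (σ/4)‖x⁺ − xᵏ‖₂² + (τ/2)‖A(x⁺ − xᵏ)‖₂² holds. Then f(xᵏ) − f(x⁺) ≥ (σ/4)‖x⁺ − xᵏ‖₂². -/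
open Filter
open scoped ENNReal RealInnerProductSpace

/-!
The surrogate `F` majorizes `f` plus the proximal term `q(x) = (σ/2)‖x − xᵏ‖² + (τ/2)‖A(x − xᵏ)‖²`
and touches `f` at `xᵏ`: the concave part `−λβ‖x‖₂` is replaced by its linearization
`−λβ⟨v, x⟩` at `xᵏ`, which lies above it since `‖v‖ ≤ 1`. Comparing `x⁺` with `xᵏ` in the
perturbed problem gives `f(x⁺) + q(x⁺) ≤ f(xᵏ) − ⟨δ, x⁺ − xᵏ⟩ ≤ f(xᵏ) + ‖δ‖‖x⁺ − xᵏ‖`, and the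
error bound absorbs the last term into all of `q(x⁺)` except `(σ/4)‖x⁺ − xᵏ‖²`.
-/

@[simp]
theorem l2Norm_zero {m : ℕ} : l2Norm (0 : Fin m → ℝ) = 0 := by
  simp [l2Norm]

theorem real_inner_le_norm_of_norm_le_one {E : Type*} [NormedAddCommGroup E]
    [InnerProductSpace ℝ E] {v : E} (hv : ‖v‖ ≤ 1) (x : E) : ⟪v, x⟫ ≤ ‖x‖ :=
  (real_inner_le_norm v x).trans (mul_le_of_le_one_left (norm_nonneg x) hv)

theorem le_sub_of_inexact_majorization_step {E : Type*} [NormedAddCommGroup E]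
    [InnerProductSpace ℝ E] {f F : E → ℝ} {xk xp δ : E} {q r : ℝ}
    (hmaj : f xp + q ≤ F xp) (htouch : F xk = f xk)
    (hmin : F xp + ⟪δ, xp - xk⟫ ≤ F xk) (herr : ‖δ‖ * ‖xp - xk‖ ≤ q - r) :
    r ≤ f xk - f xp := by
  have hδ : -(‖δ‖ * ‖xp - xk‖) ≤ ⟪δ, xp - xk⟫ := neg_le_of_abs_le (abs_real_inner_le_norm _ _)
  linarith

theorem stmt_1_general {m n : ℕ} (p : ℝ≥0∞) [Fact (1 ≤ p)]
    (A : Matrix (Fin m) (Fin n) ℝ) (b : Fin m → ℝ) (lam β σ τ : ℝ)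
    (hlam : 0 < lam) (hβ : 0 ≤ β)
    (xk v δ : EuclideanSpace ℝ (Fin n))
    (hv1 : ‖v‖ ≤ 1) (hv2 : ⟪v, xk⟫ = ‖xk‖)
    (F f : EuclideanSpace ℝ (Fin n) → ℝ)
    (hF : ∀ x, F x = lpNorm p (A.mulVec x - b) + lam * l1Norm x - lam * β * ⟪v, x⟫
      + σ / 2 * ‖x - xk‖ ^ 2 + τ / 2 * l2Norm (A.mulVec (x - xk)) ^ 2)
    (hf : ∀ x, f x = lpNorm p (A.mulVec x - b) + lam * (l1Norm x - β * ‖x‖))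
    (xp : EuclideanSpace ℝ (Fin n))
    (hmin : ∀ x, F xp + ⟪δ, xp - xk⟫ ≤ F x + ⟪δ, x - xk⟫)
    (herr : ‖δ‖ * ‖xp - xk‖ ≤ σ / 4 * ‖xp - xk‖ ^ 2 + τ / 2 * l2Norm (A.mulVec (xp - xk)) ^ 2) :
    f xk - f xp ≥ σ / 4 * ‖xp - xk‖ ^ 2 := by
  have htouch : F xk = f xk := by
    simp only [hF, hf, hv2, sub_self, Matrix.mulVec_zero, l2Norm_zero, norm_zero]
    ring
  have hmaj : f xp + (σ / 2 * ‖xp - xk‖ ^ 2 + τ / 2 * l2Norm (A.mulVec (xp - xk)) ^ 2) ≤ F xp := by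
    have hlin : 0 ≤ lam * β * (‖xp‖ - ⟪v, xp⟫) :=
      mul_nonneg (mul_nonneg hlam.le hβ) (sub_nonneg.2 (real_inner_le_norm_of_norm_le_one hv1 xp))
    rw [hF, hf]
    linarith
  have hstep : F xp + ⟪δ, xp - xk⟫ ≤ F xk := by simpa using hmin xk
  exact le_sub_of_inexact_majorization_step hmaj htouch hstep (by linarith)

/-- Descent property: one inexact proximal majorization-minimization step decreases the
objective `f(x) = ‖Ax − b‖_p + λ(‖x‖₁ − β‖x‖₂)` by at least `(σ/4)‖x⁺ − xᵏ‖₂²`. -/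
theorem stmt_1 {m n : ℕ} (p : ℝ≥0∞) [Fact (1 ≤ p)]
    (A : Matrix (Fin m) (Fin n) ℝ) (b : Fin m → ℝ) (lam β σ τ : ℝ)
    (hlam : 0 < lam) (hβ : 0 ≤ β) (hσ : 0 < σ) (hτ : 0 ≤ τ)
    (xk v δ : EuclideanSpace ℝ (Fin n))
    (hv1 : ‖v‖ ≤ 1) (hv2 : ⟪v, xk⟫ = ‖xk‖)
    (F f : EuclideanSpace ℝ (Fin n) → ℝ)
    (hF : ∀ x, F x = lpNorm p (A.mulVec x - b) + lam * l1Norm x - lam * β * ⟪v, x⟫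
      + σ / 2 * ‖x - xk‖ ^ 2 + τ / 2 * l2Norm (A.mulVec (x - xk)) ^ 2)
    (hf : ∀ x, f x = lpNorm p (A.mulVec x - b) + lam * (l1Norm x - β * ‖x‖))
    (xp : EuclideanSpace ℝ (Fin n))
    (hmin : ∀ x, F xp + ⟪δ, xp - xk⟫ ≤ F x + ⟪δ, x - xk⟫)
    (herr : ‖δ‖ * ‖xp - xk‖ ≤ σ / 4 * ‖xp - xk‖ ^ 2 + τ / 2 * l2Norm (A.mulVec (xp - xk)) ^ 2) :
    f xk - f xp ≥ σ / 4 * ‖xp - xk‖ ^ 2 :=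
  stmt_1_general p A b lam β σ τ hlam hβ xk v δ hv1 hv2 F f hF hf xp hmin herr
end

section
/- Let m, n ∈ ℕ, p ∈ [1, ∞], A a real m×n matrix, b ∈ ℝᵐ, λ > 0, β ≥ 0. Define f(x) := ‖Ax − b‖_p + λ(‖x‖₁ − β‖x‖₂). Let {xᵏ}, {vᵏ}, {δᵏ} be sequences in ℝⁿ and {σᵏ}, {τᵏ} sequences of reals with σᵏ > 0 and τᵏ ≥ 0, such that for every k: (i) ‖vᵏ‖₂ ≤ 1 and ⟨vᵏ, xᵏ⟩ = ‖xᵏ‖₂; (ii) xᵏ⁺¹ is a global minimizer of x ↦ ‖Ax − b‖_p + λ‖x‖₁ − λβ⟨vᵏ, x⟩ + (σᵏ/2)‖x − xᵏ‖₂² + (τᵏ/2)‖A(x − xᵏ)‖₂² + ⟨δᵏ, x − xᵏ⟩; (iii) ‖δᵏ‖₂ · ‖xᵏ⁺¹ − xᵏ‖₂ ≤ (σᵏ/4)‖xᵏ⁺¹ − xᵏ‖₂² + (τᵏ/2)‖A(xᵏ⁺¹ − xᵏ)‖₂². If moreover every sublevel set {x ∈ ℝⁿ : f(x) ≤ c}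 (c ∈ ℝ) is bounded, then the sequence {xᵏ} is bounded. -/
open Filter
open scoped ENNReal RealInnerProductSpace

/-- Boundedness of the PMM iterates under the coercivity (bounded sublevel sets) assumption. -/
theorem stmt_2 {m n : ℕ} (p : ℝ≥0∞) [Fact (1 ≤ p)]
    (A : Matrix (Fin m) (Fin n) ℝ) (b : Fin m → ℝ) (lam β : ℝ)
    (hlam : 0 < lam) (hβ : 0 ≤ β)
    (f : EuclideanSpace ℝ (Fin n) → ℝ)
    (hf : ∀ x, f x = lpNorm p (A.mulVec x - b) + lam * (l1Norm x - β * ‖x‖))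
    (x v δ : ℕ → EuclideanSpace ℝ (Fin n)) (σ τ : ℕ → ℝ)
    (hσ : ∀ k, 0 < σ k) (hτ : ∀ k, 0 ≤ τ k)
    (hv1 : ∀ k, ‖v k‖ ≤ 1) (hv2 : ∀ k, ⟪v k, x k⟫ = ‖x k‖)
    (hmin : ∀ k, ∀ y : EuclideanSpace ℝ (Fin n),
      lpNorm p (A.mulVec (x (k + 1)) - b) + lam * l1Norm (x (k + 1))
          - lam * β * ⟪v k, x (k + 1)⟫ + σ k / 2 * ‖x (k + 1) - x k‖ ^ 2
          + τ k / 2 * l2Norm (A.mulVec (x (k + 1) - x k)) ^ 2 + ⟪δ k, x (k + 1) - x k⟫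
        ≤ lpNorm p (A.mulVec y - b) + lam * l1Norm y - lam * β * ⟪v k, y⟫
          + σ k / 2 * ‖y - x k‖ ^ 2 + τ k / 2 * l2Norm (A.mulVec (y - x k)) ^ 2
          + ⟪δ k, y - x k⟫)
    (herr : ∀ k, ‖δ k‖ * ‖x (k + 1) - x k‖
      ≤ σ k / 4 * ‖x (k + 1) - x k‖ ^ 2 + τ k / 2 * l2Norm (A.mulVec (x (k + 1) - x k)) ^ 2)
    (hlevel : ∀ c : ℝ, Bornology.IsBounded {y : EuclideanSpace ℝ (Fin n) | f y ≤ c}) :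
    Bornology.IsBounded (Set.range x) := by
  have key : ∀ k, f (x (k + 1)) ≤ f (x k) := by
    intro k
    have h := hmin k (x k)
    simp only [sub_self, Matrix.mulVec_zero, norm_zero, inner_zero_right] at h
    have hz : l2Norm (0 : Fin m → ℝ) = 0 := by
      simp [l2Norm]
    rw [hz, hv2 k] at h
    set d := x (k + 1) - x k with hd
    have e1 : lam * β * ⟪v k, x (k + 1)⟫ ≤ lam * β * ‖x (k + 1)‖ := by
      have hcs : ⟪v k, x (k + 1)⟫ ≤ ‖x (k + 1)‖ := by
        calc ⟪v k, x (k + 1)⟫ ≤ ‖v k‖ * ‖x (k + 1)‖ := real_inner_le_norm _ _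
        _ ≤ 1 * ‖x (k + 1)‖ := by
            exact mul_le_mul_of_nonneg_right (hv1 k) (norm_nonneg _)
        _ = ‖x (k + 1)‖ := one_mul _
      exact mul_le_mul_of_nonneg_left hcs (mul_nonneg hlam.le hβ)
    have e2 : -(‖δ k‖ * ‖d‖) ≤ ⟪δ k, d⟫ := by
      have := abs_real_inner_le_norm (δ k) d
      have := neg_abs_le (⟪δ k, d⟫ : ℝ)
      linarith
    have e3 := herr k
    have e4 : 0 ≤ σ k / 4 * ‖d‖ ^ 2 :=
      mul_nonneg (by linarith [(hσ k).le]) (sq_nonneg _)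
    rw [hf (x (k + 1)), hf (x k)]
    rw [← hd] at e3
    nlinarith [h, e1, e2, e3, e4]
  have mono : ∀ k, f (x k) ≤ f (x 0) := by
    intro k
    induction k with
    | zero => exact le_refl _
    | succ k ih => exact (key k).trans ih
  refine (hlevel (f (x 0))).subset ?_
  rintro _ ⟨k, rfl⟩
  exact mono k
end

section
/- Let m, n ∈ ℕ, p ∈ [1, ∞], A a real m×n matrix, b ∈ ℝᵐ, λ > 0, β ≥ 0. Let {x_j}, {v_j}, {δ_j} be sequences in ℝⁿ, {x_j⁺} a sequence in ℝⁿ, and {σ_j}, {τ_j} sequences of nonnegative reals such that, for every j, x_j⁺ is a global minimizer of x ↦ ‖Ax − b‖_p + λ‖x‖₁ − λβ⟨v_j, x⟩ + (σ_j/2)‖x − x_j‖₂² + (τ_j/2)‖A(x − x_j)‖₂² + ⟨δ_j, x − x_j⟩. Suppose x_j → x^∞, x_j⁺ → x^∞, δ_j → 0, v_j → v^∞, σ_j → σ^∞ and τ_j → τ^∞. Then x^∞ is a global minimizer of x ↦ ‖Ax − b‖_p + λ‖x‖₁ − λβ⟨v^∞, x⟩ + (σ^∞/2)‖x − x^∞‖₂²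 + (τ^∞/2)‖A(x − x^∞)‖₂². -/
open Filter
open scoped ENNReal RealInnerProductSpace

lemma lpNorm_continuous (p : ℝ≥0∞) [Fact (1 ≤ p)] {m : ℕ} :
    Continuous (fun y : Fin m → ℝ => lpNorm p y) :=
  continuous_norm.comp (PiLp.continuous_toLp p _)

lemma l2Norm_continuous {m : ℕ} : Continuous (fun y : Fin m → ℝ => l2Norm y) :=
  continuous_norm.comp (PiLp.continuous_toLp 2 _)

lemma l1Norm_continuous {n : ℕ} : Continuous (fun y : Fin n → ℝ => l1Norm y) := by
  unfold l1Norm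
  exact continuous_finset_sum _ fun i _ => (continuous_apply i).abs

lemma mulVec_continuous {m n : ℕ} (A : Matrix (Fin m) (Fin n) ℝ) :
    Continuous (fun z : EuclideanSpace ℝ (Fin n) => A.mulVec z) := by
  have : Continuous (fun z : Fin n → ℝ => A.mulVec z) :=
    LinearMap.continuous_on_pi A.mulVecLin
  exact this.comp (PiLp.continuous_ofLp 2 _)

set_option maxHeartbeats 1000000 in
/-- Passing to the limit in the inexact PMM subproblems: the limit point minimizes the
limiting majorized problem. -/
theorem stmt_3 {m n : ℕ} (p : ℝ≥0∞) [Fact (1 ≤ p)]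
    (A : Matrix (Fin m) (Fin n) ℝ) (b : Fin m → ℝ) (lam β : ℝ)
    (hlam : 0 < lam) (hβ : 0 ≤ β)
    (x v δ xp : ℕ → EuclideanSpace ℝ (Fin n)) (σ τ : ℕ → ℝ)
    (hσ : ∀ j, 0 ≤ σ j) (hτ : ∀ j, 0 ≤ τ j)
    (hmin : ∀ j, ∀ y : EuclideanSpace ℝ (Fin n),
      lpNorm p (A.mulVec (xp j) - b) + lam * l1Norm (xp j) - lam * β * ⟪v j, xp j⟫
          + σ j / 2 * ‖xp j - x j‖ ^ 2 + τ j / 2 * l2Norm (A.mulVec (xp j - x j)) ^ 2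
          + ⟪δ j, xp j - x j⟫
        ≤ lpNorm p (A.mulVec y - b) + lam * l1Norm y - lam * β * ⟪v j, y⟫
          + σ j / 2 * ‖y - x j‖ ^ 2 + τ j / 2 * l2Norm (A.mulVec (y - x j)) ^ 2
          + ⟪δ j, y - x j⟫)
    (xinf vinf : EuclideanSpace ℝ (Fin n)) (σinf τinf : ℝ)
    (hx : Tendsto x atTop (nhds xinf)) (hxp : Tendsto xp atTop (nhds xinf))
    (hδ : Tendsto δ atTop (nhds 0)) (hv : Tendsto v atTop (nhds vinf))
    (hσlim : Tendsto σ atTop (nhds σinf)) (hτlim : Tendsto τ atTop (nhds τinf)) :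
    ∀ y : EuclideanSpace ℝ (Fin n),
      lpNorm p (A.mulVec xinf - b) + lam * l1Norm xinf - lam * β * ⟪vinf, xinf⟫
          + σinf / 2 * ‖xinf - xinf‖ ^ 2 + τinf / 2 * l2Norm (A.mulVec (xinf - xinf)) ^ 2
        ≤ lpNorm p (A.mulVec y - b) + lam * l1Norm y - lam * β * ⟪vinf, y⟫
          + σinf / 2 * ‖y - xinf‖ ^ 2 + τinf / 2 * l2Norm (A.mulVec (y - xinf)) ^ 2 := by
  intro y
  set f : EuclideanSpace ℝ (Fin n) → EuclideanSpace ℝ (Fin n) → EuclideanSpace ℝ (Fin n) →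
      EuclideanSpace ℝ (Fin n) → ℝ → ℝ → ℝ := fun a xc vv dd s t =>
    lpNorm p (A.mulVec a - b) + lam * l1Norm a - lam * β * ⟪vv, a⟫
      + s / 2 * ‖a - xc‖ ^ 2 + t / 2 * l2Norm (A.mulVec (a - xc)) ^ 2 + ⟪dd, a - xc⟫ with hf
  have hcont : ∀ (g1 g2 g3 g4 : ℕ → EuclideanSpace ℝ (Fin n)) (g5 g6 : ℕ → ℝ)
      (l1 l2 l3 l4 : EuclideanSpace ℝ (Fin n)) (l5 l6 : ℝ),
      Tendsto g1 atTop (nhds l1) → Tendsto g2 atTop (nhds l2) →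
      Tendsto g3 atTop (nhds l3) → Tendsto g4 atTop (nhds l4) →
      Tendsto g5 atTop (nhds l5) → Tendsto g6 atTop (nhds l6) →
      Tendsto (fun j => f (g1 j) (g2 j) (g3 j) (g4 j) (g5 j) (g6 j)) atTop
        (nhds (f l1 l2 l3 l4 l5 l6)) := by
    intro g1 g2 g3 g4 g5 g6 l1 l2 l3 l4 l5 l6 h1 h2 h3 h4 h5 h6
    simp only [hf]
    have hA1 : Tendsto (fun j => A.mulVec (g1 j) - b) atTop (nhds (A.mulVec l1 - b)) :=
      (((mulVec_continuous A).tendsto _).comp h1).sub tendsto_const_nhds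
    have hsub : Tendsto (fun j => g1 j - g2 j) atTop (nhds (l1 - l2)) := h1.sub h2
    have hA2 : Tendsto (fun j => A.mulVec (g1 j - g2 j)) atTop (nhds (A.mulVec (l1 - l2))) :=
      ((mulVec_continuous A).tendsto _).comp hsub
    have t1 : Tendsto (fun j => lpNorm p (A.mulVec (g1 j) - b)) atTop
        (nhds (lpNorm p (A.mulVec l1 - b))) := ((lpNorm_continuous p).tendsto _).comp hA1
    have t2 : Tendsto (fun j => lam * l1Norm (g1 j)) atTop (nhds (lam * l1Norm l1)) :=
      tendsto_const_nhds.mul ((l1Norm_continuous.tendsto _).comp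
        (((PiLp.continuous_ofLp 2 _).tendsto _).comp h1))
    have t3 : Tendsto (fun j => lam * β * ⟪g3 j, g1 j⟫) atTop (nhds (lam * β * ⟪l3, l1⟫)) :=
      tendsto_const_nhds.mul (h3.inner h1)
    have t4 : Tendsto (fun j => g5 j / 2 * ‖g1 j - g2 j‖ ^ 2) atTop
        (nhds (l5 / 2 * ‖l1 - l2‖ ^ 2)) := (h5.div_const 2).mul ((hsub.norm).pow 2)
    have t5 : Tendsto (fun j => g6 j / 2 * l2Norm (A.mulVec (g1 j - g2 j)) ^ 2) atTop
        (nhds (l6 / 2 * l2Norm (A.mulVec (l1 - l2)) ^ 2)) :=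
      (h6.div_const 2).mul ((((l2Norm_continuous).tendsto _).comp hA2).pow 2)
    have t6 : Tendsto (fun j => ⟪g4 j, g1 j - g2 j⟫) atTop (nhds ⟪l4, l1 - l2⟫) :=
      h4.inner hsub
    exact ((((t1.add t2).sub t3).add t4).add t5).add t6
  have hL : Tendsto (fun j => f (xp j) (x j) (v j) (δ j) (σ j) (τ j)) atTop
      (nhds (f xinf xinf vinf 0 σinf τinf)) :=
    hcont _ _ _ _ _ _ _ _ _ _ _ _ hxp hx hv hδ hσlim hτlim
  have hR : Tendsto (fun j => f y (x j) (v j) (δ j) (σ j) (τ j)) atTop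
      (nhds (f y xinf vinf 0 σinf τinf)) :=
    hcont _ _ _ _ _ _ _ _ _ _ _ _ tendsto_const_nhds hx hv hδ hσlim hτlim
  have key : f xinf xinf vinf 0 σinf τinf ≤ f y xinf vinf 0 σinf τinf :=
    le_of_tendsto_of_tendsto' hL hR (fun j => hmin j y)
  simpa only [hf, inner_zero_left, add_zero] using key
end

section
/- Let m, n ∈ ℕ, p ∈ [1, ∞], A a real m×n matrix, b ∈ ℝᵐ, λ > 0, β ≥ 0. Let x̄ ∈ ℝⁿ with x̄ ≠ 0 and set v̄ := x̄ / ‖x̄‖₂. Define f(x) := ‖Ax − b‖_p + λ(‖x‖₁ − β‖x‖₂). Then the following are equivalent: (i) for every d ∈ ℝⁿ, liminf_{t → 0⁺} ( f(x̄ + t·d) − f(x̄) ) / t ≥ 0 (i.e., x̄ is a d-stationary point of f); (ii) there exist σ ≥ 0 and τ ≥ 0 such that x̄ is a global minimizer of x ↦ ‖Ax − b‖_p + λ‖x‖₁ − λβ⟨v̄, x⟩ + (σ/2)‖x − x̄‖₂² + (τ/2)‖A(x − x̄)‖₂². -/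
/-!
Split `f = g + k` with `g x = ‖Ax - b‖_p + λ‖x‖₁ - λβ⟪v̄, x⟫` convex and
`k x = λβ (⟪v̄, x⟫ - ‖x‖₂)`. As `x̄ ≠ 0`, the Euclidean norm is differentiable at `x̄` with
gradient `v̄`, so `k` has zero derivative there, while the difference quotients of the convex `g`
stay bounded; hence `f` and `g` have the same lower directional derivatives at `x̄`. For convex `g`,
nonnegative lower directional derivatives mean that `x̄` minimizes `g` globally. The proximal terms
are quadratic, so of order `t²` along rays from `x̄`, and adding them does not change whether `x̄`
minimizes the convex `g`; `σ = τ = 0` gives the converse.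
-/

open Filter
open scoped ENNReal RealInnerProductSpace

open Set
open scoped Topology

section Convex

variable {E : Type*} [AddCommGroup E] [Module ℝ E] {g : E → ℝ}

def IsDStationary (f : E → ℝ) (x : E) : Prop :=
  ∀ d : E, 0 ≤ liminf (fun t : ℝ => (f (x + t • d) - f x) / t) (𝓝[>] 0)

theorem ConvexOn.slope_le_sub (hg : ConvexOn ℝ univ g) (x d : E) {t : ℝ} (ht₀ : 0 < t)
    (ht₁ : t ≤ 1) : (g (x + t • d) - g x) / t ≤ g (x + d) - g x := by
  have h := hg.2 (mem_univ x) (mem_univ (x + d)) (sub_nonneg.2 ht₁) ht₀.le (sub_add_cancel 1 t)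
  rw [show (1 - t) • x + t • (x + d) = x + t • d by module, smul_eq_mul, smul_eq_mul] at h
  rw [div_le_iff₀ ht₀]
  linarith

theorem ConvexOn.sub_le_slope (hg : ConvexOn ℝ univ g) (x d : E) {t : ℝ} (ht₀ : 0 < t) :
    g x - g (x - d) ≤ (g (x + t • d) - g x) / t := by
  have ht : 0 < 1 + t := by linarith
  have h := hg.2 (mem_univ (x - d)) (mem_univ (x + t • d)) (by positivity : 0 ≤ t / (1 + t))
    (by positivity : 0 ≤ 1 / (1 + t)) (by field_simp; ring)
  rw [show (t / (1 + t)) • (x - d) + (1 / (1 + t)) • (x + t • d) = x by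
    match_scalars <;> field_simp <;> ring, smul_eq_mul, smul_eq_mul] at h
  rw [le_div_iff₀ ht₀]
  have h' := mul_le_mul_of_nonneg_left h ht.le
  field_simp at h'
  linarith

theorem ConvexOn.isBoundedUnder_le_slope (hg : ConvexOn ℝ univ g) (x d : E) :
    IsBoundedUnder (· ≤ ·) (𝓝[>] 0) fun t : ℝ => (g (x + t • d) - g x) / t :=
  isBoundedUnder_of_eventually_le <| eventually_of_mem (Ioo_mem_nhdsGT one_pos) fun _ ht =>
    hg.slope_le_sub x d ht.1 ht.2.le

theorem ConvexOn.isBoundedUnder_ge_slope (hg : ConvexOn ℝ univ g) (x d : E) :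
    IsBoundedUnder (· ≥ ·) (𝓝[>] 0) fun t : ℝ => (g (x + t • d) - g x) / t :=
  isBoundedUnder_of_eventually_ge <| eventually_of_mem self_mem_nhdsWithin fun _ ht =>
    hg.sub_le_slope x d ht

theorem ConvexOn.isDStationary_iff_isMinOn (hg : ConvexOn ℝ univ g) (x : E) :
    IsDStationary g x ↔ IsMinOn g univ x := by
  rw [isMinOn_univ_iff]
  refine ⟨fun h y => ?_, fun h d => ?_⟩
  · have hle : liminf (fun t : ℝ => (g (x + t • (y - x)) - g x) / t) (𝓝[>] 0)
        ≤ g (x + (y - x)) - g x :=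
      liminf_le_of_frequently_le
        (eventually_of_mem (Ioo_mem_nhdsGT one_pos) fun _ ht =>
          hg.slope_le_sub x _ ht.1 ht.2.le).frequently
        (hg.isBoundedUnder_ge_slope x _)
    have := (h (y - x)).trans hle
    rw [add_sub_cancel] at this
    linarith
  · refine le_liminf_of_le (hg.isBoundedUnder_le_slope x d).isCoboundedUnder_ge ?_
    filter_upwards [self_mem_nhdsWithin] with t ht
    exact div_nonneg (sub_nonneg.2 (h _)) (le_of_lt ht)

theorem liminf_add_of_tendsto_zero {ι : Type*} {F : Filter ι} [F.NeBot] {u v : ι → ℝ}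
    (hu : IsBoundedUnder (· ≤ ·) F u) (hu' : IsBoundedUnder (· ≥ ·) F u)
    (hv : Tendsto v F (𝓝 0)) : liminf (u + v) F = liminf u F := by
  apply le_antisymm
  · have := liminf_add_le hv.isBoundedUnder_ge hv.isBoundedUnder_le hu' hu.isCoboundedUnder_ge
    rwa [hv.limsup_eq, zero_add, add_comm] at this
  · have := le_liminf_add hu' hu hv.isBoundedUnder_ge hv.isBoundedUnder_le.isCoboundedUnder_ge
    rwa [hv.liminf_eq, add_zero] at this

theorem ConvexOn.isDStationary_add_iff (hg : ConvexOn ℝ univ g) {k : E → ℝ} {x : E}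
    (hk : ∀ d, HasLineDerivAt ℝ k 0 x d) : IsDStationary (g + k) x ↔ IsDStationary g x := by
  refine forall_congr' fun d => ?_
  have hsplit : (fun t : ℝ => ((g + k) (x + t • d) - (g + k) x) / t)
      = (fun t : ℝ => (g (x + t • d) - g x) / t) + fun t : ℝ => (k (x + t • d) - k x) / t := by
    funext t
    simp only [Pi.add_apply]
    ring
  have hk' : Tendsto (fun t : ℝ => (k (x + t • d) - k x) / t) (𝓝[>] 0) (𝓝 0) := by
    simpa only [smul_eq_mul, inv_mul_eq_div] using (hk d).tendsto_slope_zero_right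
  rw [hsplit, liminf_add_of_tendsto_zero (hg.isBoundedUnder_le_slope x d)
    (hg.isBoundedUnder_ge_slope x d) hk']

theorem ConvexOn.isMinOn_of_isMinOn_add_quadratic (hg : ConvexOn ℝ univ g) {q : E → ℝ}
    (hq : ∀ (t : ℝ) (v : E), q (t • v) = t ^ 2 * q v) {x : E}
    (h : IsMinOn (fun y => g y + q (y - x)) univ x) : IsMinOn g univ x := by
  rw [isMinOn_univ_iff] at h ⊢
  intro y
  have hq₀ : q 0 = 0 := by simpa using hq 0 0
  -- Minimality at `x + t • (y - x)` loses `t² q (y - x)`; convexity divides this loss by `t` at `y`.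
  have hbound : ∀ t ∈ Ioo (0 : ℝ) 1, -(t * q (y - x)) ≤ g y - g x := by
    rintro t ⟨ht₀, ht₁⟩
    have hmin := h (x + t • (y - x))
    rw [sub_self, hq₀, add_zero, add_sub_cancel_left, hq] at hmin
    have hslope := hg.slope_le_sub x (y - x) ht₀ ht₁.le
    rw [add_sub_cancel, div_le_iff₀ ht₀] at hslope
    nlinarith
  have hlim : Tendsto (fun t : ℝ => -(t * q (y - x))) (𝓝[>] 0) (𝓝 0) := by
    have hcont : Tendsto (fun t : ℝ => -(t * q (y - x))) (𝓝 0) (𝓝 (-(0 * q (y - x)))) :=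
      (tendsto_id.mul_const _).neg
    simpa using hcont.mono_left nhdsWithin_le_nhds
  exact sub_nonneg.1 (le_of_tendsto hlim (eventually_of_mem (Ioo_mem_nhdsGT one_pos) hbound))

end Convex

theorem hasFDerivAt_norm_of_ne_zero {F : Type*} [NormedAddCommGroup F] [InnerProductSpace ℝ F]
    {x : F} (hx : x ≠ 0) : HasFDerivAt (‖·‖) (innerSL ℝ (‖x‖⁻¹ • x)) x := by
  have h := (hasStrictFDerivAt_norm_sq x).hasFDerivAt.sqrt (by positivity)
  simp only [Real.sqrt_sq (norm_nonneg _)] at h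
  refine h.congr_fderiv ?_
  ext d
  simp only [one_div, mul_inv_rev, smul_apply, coe_innerSL_apply, nsmul_eq_mul,
    Nat.cast_ofNat, smul_eq_mul, map_smul]
  field_simp

theorem convexOn_univ_norm_linearMap_sub {E F : Type*} [AddCommGroup E] [Module ℝ E]
    [SeminormedAddCommGroup F] [NormedSpace ℝ F] (L : E →ₗ[ℝ] F) (c : F) :
    ConvexOn ℝ univ fun x => ‖L x - c‖ := by
  simpa [Function.comp_def, sub_eq_neg_add] using
    (convexOn_univ_norm.translate_right (-c)).comp_linearMap L

theorem convexOn_lpNorm_add_l1Norm_sub_inner {m n : ℕ} (p : ℝ≥0∞) [Fact (1 ≤ p)]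
    (A : Matrix (Fin m) (Fin n) ℝ) (b : Fin m → ℝ) {lam : ℝ} (hlam : 0 ≤ lam) (c : ℝ)
    (v : EuclideanSpace ℝ (Fin n)) :
    ConvexOn ℝ univ fun x : EuclideanSpace ℝ (Fin n) =>
      lpNorm p (A.mulVec x - b) + lam * l1Norm x - c * ⟪v, x⟫ := by
  let ofL2 := (WithLp.linearEquiv 2 ℝ (Fin n → ℝ)).toLinearMap
  have hres := convexOn_univ_norm_linearMap_sub
    ((WithLp.linearEquiv p ℝ (Fin m → ℝ)).symm.toLinearMap ∘ₗ A.mulVecLin ∘ₗ ofL2)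
    (WithLp.toLp p b)
  have hl1 := convexOn_univ_norm_linearMap_sub
    ((WithLp.linearEquiv 1 ℝ (Fin n → ℝ)).symm.toLinearMap ∘ₗ ofL2) 0
  have hlin := (c • innerₛₗ ℝ v).concaveOn convex_univ
  refine ((hres.add (hl1.smul hlam)).sub hlin).congr fun x _ => ?_
  simp [ofL2, lpNorm, l1Norm, PiLp.norm_eq_of_L1]

theorem stmt_5_general {m n : ℕ} (p : ℝ≥0∞) [Fact (1 ≤ p)]
    (A : Matrix (Fin m) (Fin n) ℝ) (b : Fin m → ℝ) (lam β : ℝ)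
    (hlam : 0 < lam)
    (xbar : EuclideanSpace ℝ (Fin n)) (hxbar : xbar ≠ 0)
    (vbar : EuclideanSpace ℝ (Fin n)) (hvbar : vbar = ‖xbar‖⁻¹ • xbar)
    (f : EuclideanSpace ℝ (Fin n) → ℝ)
    (hf : ∀ x, f x = lpNorm p (A.mulVec x - b) + lam * (l1Norm x - β * ‖x‖)) :
    (∀ d : EuclideanSpace ℝ (Fin n),
        0 ≤ Filter.liminf (fun t : ℝ => (f (xbar + t • d) - f xbar) / t)
            (nhdsWithin 0 (Set.Ioi 0)))
      ↔ ∃ σ τ : ℝ, 0 ≤ σ ∧ 0 ≤ τ ∧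
          ∀ x : EuclideanSpace ℝ (Fin n),
            lpNorm p (A.mulVec xbar - b) + lam * l1Norm xbar - lam * β * ⟪vbar, xbar⟫
                + σ / 2 * ‖xbar - xbar‖ ^ 2 + τ / 2 * l2Norm (A.mulVec (xbar - xbar)) ^ 2
              ≤ lpNorm p (A.mulVec x - b) + lam * l1Norm x - lam * β * ⟪vbar, x⟫
                + σ / 2 * ‖x - xbar‖ ^ 2 + τ / 2 * l2Norm (A.mulVec (x - xbar)) ^ 2 := by
  set g := fun x : EuclideanSpace ℝ (Fin n) =>
    lpNorm p (A.mulVec x - b) + lam * l1Norm x - lam * β * ⟪vbar, x⟫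
  set k := fun x : EuclideanSpace ℝ (Fin n) => lam * β * (⟪vbar, x⟫ - ‖x‖)
  have hg : ConvexOn ℝ univ g := convexOn_lpNorm_add_l1Norm_sub_inner p A b hlam.le _ vbar
  have hk : HasFDerivAt k (0 : EuclideanSpace ℝ (Fin n) →L[ℝ] ℝ) xbar := by
    have h := ((innerSL ℝ vbar).hasFDerivAt.sub (hasFDerivAt_norm_of_ne_zero hxbar)).const_mul
      (lam * β)
    rwa [← hvbar, sub_self, smul_zero] at h
  have hfgk : f = g + k := funext fun x => by simp only [hf, g, k, Pi.add_apply]; ring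
  have hstat : IsDStationary f xbar ↔ IsMinOn g univ xbar := by
    rw [hfgk, hg.isDStationary_add_iff fun d => by simpa using hk.hasLineDerivAt d,
      hg.isDStationary_iff_isMinOn]
  refine hstat.trans ⟨fun hmin => ?_, fun ⟨σ, τ, _, _, hmin⟩ => ?_⟩
  · exact ⟨0, 0, le_rfl, le_rfl, fun x => by simpa [g, l2Norm] using hmin (mem_univ x)⟩
  · refine hg.isMinOn_of_isMinOn_add_quadratic
      (q := fun v => σ / 2 * ‖v‖ ^ 2 + τ / 2 * l2Norm (A.mulVec v) ^ 2) (fun t v => ?_)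
      fun x _ => by simpa [g, l2Norm, add_assoc] using hmin x
    simp only [norm_smul, WithLp.ofLp_smul, Matrix.mulVec_smul, l2Norm, WithLp.equiv_symm_apply,
      WithLp.toLp_smul, Real.norm_eq_abs, mul_pow, sq_abs]
    ring

/-- Lemma 3.3: `x̄ ≠ 0` is a d-stationary point of `f` iff it globally minimizes the
proximal majorization `f̃(·; σ, τ, v̄, x̄, Ax̄)` for some `σ, τ ≥ 0`. -/
theorem stmt_5 {m n : ℕ} (p : ℝ≥0∞) [Fact (1 ≤ p)]
    (A : Matrix (Fin m) (Fin n) ℝ) (b : Fin m → ℝ) (lam β : ℝ)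
    (hlam : 0 < lam) (hβ : 0 ≤ β)
    (xbar : EuclideanSpace ℝ (Fin n)) (hxbar : xbar ≠ 0)
    (vbar : EuclideanSpace ℝ (Fin n)) (hvbar : vbar = ‖xbar‖⁻¹ • xbar)
    (f : EuclideanSpace ℝ (Fin n) → ℝ)
    (hf : ∀ x, f x = lpNorm p (A.mulVec x - b) + lam * (l1Norm x - β * ‖x‖)) :
    (∀ d : EuclideanSpace ℝ (Fin n),
        0 ≤ Filter.liminf (fun t : ℝ => (f (xbar + t • d) - f xbar) / t)
            (nhdsWithin 0 (Set.Ioi 0)))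
      ↔ ∃ σ τ : ℝ, 0 ≤ σ ∧ 0 ≤ τ ∧
          ∀ x : EuclideanSpace ℝ (Fin n),
            lpNorm p (A.mulVec xbar - b) + lam * l1Norm xbar - lam * β * ⟪vbar, xbar⟫
                + σ / 2 * ‖xbar - xbar‖ ^ 2 + τ / 2 * l2Norm (A.mulVec (xbar - xbar)) ^ 2
              ≤ lpNorm p (A.mulVec x - b) + lam * l1Norm x - lam * β * ⟪vbar, x⟫
                + σ / 2 * ‖x - xbar‖ ^ 2 + τ / 2 * l2Norm (A.mulVec (x - xbar)) ^ 2 :=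
  stmt_5_general p A b lam β hlam xbar hxbar vbar hvbar f hf
end

section
/- Let n ∈ ℕ, μ > 0 and x* ∈ ℝⁿ. The function y ↦ μ‖y‖₁ + (1/2)‖y − x*‖₂² has a unique global minimizer y*, given componentwise by the soft-thresholding formula y*ᵢ = sign(x*ᵢ) · max(|x*ᵢ| − μ, 0) for all i. -/
noncomputable def softThreshold (μ x : ℝ) : ℝ := Real.sign x * max (|x| - μ) 0

section softThreshold

variable {μ : ℝ}

theorem softThreshold_of_le {x : ℝ} (hμ : 0 ≤ μ) (hx : μ ≤ x) : softThreshold μ x = x - μ := by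
  rcases hx.lt_or_eq with hx | rfl
  · rw [softThreshold, Real.sign_of_pos (by linarith), abs_of_pos (by linarith),
      max_eq_left (by linarith), one_mul]
  · simp [softThreshold, abs_of_nonneg hμ]

theorem softThreshold_of_le_neg {x : ℝ} (hμ : 0 ≤ μ) (hx : x ≤ -μ) :
    softThreshold μ x = x + μ := by
  rcases hx.lt_or_eq with hx | rfl
  · rw [softThreshold, Real.sign_of_neg (by linarith), abs_of_neg (by linarith),
      max_eq_left (by linarith)]
    ring
  · simp [softThreshold, abs_of_nonneg hμ]

theorem softThreshold_of_abs_le {x : ℝ} (hx : |x| ≤ μ) : softThreshold μ x = 0 := by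
  simp [softThreshold, max_eq_right (sub_nonpos.mpr hx)]

theorem softThreshold_cases (hμ : 0 ≤ μ) (x : ℝ) :
    (μ ≤ x ∧ softThreshold μ x = x - μ) ∨ (x ≤ -μ ∧ softThreshold μ x = x + μ) ∨
      (|x| ≤ μ ∧ softThreshold μ x = 0) := by
  by_cases h₁ : μ ≤ x
  · exact Or.inl ⟨h₁, softThreshold_of_le hμ h₁⟩
  by_cases h₂ : x ≤ -μ
  · exact Or.inr <| Or.inl ⟨h₂, softThreshold_of_le_neg hμ h₂⟩
  have hx : |x| ≤ μ := abs_le.mpr ⟨by linarith, by linarith⟩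
  exact Or.inr <| Or.inr ⟨hx, softThreshold_of_abs_le hx⟩

theorem abs_sub_softThreshold_le (hμ : 0 ≤ μ) (x : ℝ) : |x - softThreshold μ x| ≤ μ := by
  rcases softThreshold_cases hμ x with ⟨-, h⟩ | ⟨-, h⟩ | ⟨hx, h⟩ <;> rw [h]
  · simp [abs_of_nonneg hμ]
  · simp [abs_of_nonneg hμ]
  · simpa using hx

theorem sub_softThreshold_mul_softThreshold (hμ : 0 ≤ μ) (x : ℝ) :
    (x - softThreshold μ x) * softThreshold μ x = μ * |softThreshold μ x| := by
  rcases softThreshold_cases hμ x with ⟨hx, h⟩ | ⟨hx, h⟩ | ⟨-, h⟩ <;> rw [h]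
  · rw [abs_of_nonneg (by linarith)]; ring
  · rw [abs_of_nonpos (by linarith)]; ring
  · simp

theorem softThreshold_optimality (hμ : 0 ≤ μ) (x t : ℝ) :
    μ * |softThreshold μ x| + (softThreshold μ x - x) ^ 2 / 2 + (t - softThreshold μ x) ^ 2 / 2
      ≤ μ * |t| + (t - x) ^ 2 / 2 := by
  set s := softThreshold μ x
  have hsub : (x - s) * t ≤ μ * |t| :=
    calc (x - s) * t ≤ |x - s| * |t| := by rw [← abs_mul]; exact le_abs_self _
      _ ≤ μ * |t| := mul_le_mul_of_nonneg_right (abs_sub_softThreshold_le hμ x) (abs_nonneg t)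
  nlinarith [sub_softThreshold_mul_softThreshold hμ x]

end softThreshold

theorem isUniqueMin_of_sq_growth {E : Type*} [NormedAddCommGroup E]
    {f : E → ℝ} {a : E} (h : ∀ y, f a + ‖y - a‖ ^ 2 / 2 ≤ f y) :
    (∀ y, f a ≤ f y) ∧ ∀ y, (∀ z, f y ≤ f z) → y = a := by
  refine ⟨fun y => by nlinarith [h y, sq_nonneg ‖y - a‖], fun y hy => ?_⟩
  have : ‖y - a‖ ^ 2 ≤ 0 := by linarith [h y, hy a]
  rw [← sub_eq_zero, ← norm_le_zero_iff]
  nlinarith [norm_nonneg (y - a)]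

theorem l1Norm_add_norm_sq_growth {n : ℕ} {μ : ℝ} (hμ : 0 ≤ μ)
    {x s : EuclideanSpace ℝ (Fin n)} (hs : ∀ i, s i = softThreshold μ (x i))
    (y : EuclideanSpace ℝ (Fin n)) :
    μ * l1Norm s + 1 / 2 * ‖s - x‖ ^ 2 + ‖y - s‖ ^ 2 / 2 ≤ μ * l1Norm y + 1 / 2 * ‖y - x‖ ^ 2 := by
  simp only [l1Norm, EuclideanSpace.real_norm_sq_eq, PiLp.sub_apply, Finset.mul_sum,
    Finset.sum_div, ← Finset.sum_add_distrib]
  refine Finset.sum_le_sum fun i _ => ?_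
  rw [hs]
  linarith [softThreshold_optimality hμ (x i) (y i)]

/-- The proximal mapping of `μ‖·‖₁` is the componentwise soft-thresholding operator. -/
theorem stmt_6 {n : ℕ} (μ : ℝ) (hμ : 0 < μ) (xstar : EuclideanSpace ℝ (Fin n))
    (g : EuclideanSpace ℝ (Fin n) → ℝ)
    (hg : ∀ y, g y = μ * l1Norm y + 1 / 2 * ‖y - xstar‖ ^ 2)
    (ystar : EuclideanSpace ℝ (Fin n))
    (hystar : ∀ i, ystar i = Real.sign (xstar i) * max (|xstar i| - μ) 0) :
    (∀ y, g ystar ≤ g y) ∧ ∀ y : EuclideanSpace ℝ (Fin n), (∀ z, g y ≤ g z) → y = ystar := by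
  refine isUniqueMin_of_sq_growth fun y => ?_
  simpa only [hg] using l1Norm_add_norm_sq_growth hμ.le hystar y
end

section
/- Let n ∈ ℕ, μ > 0 and x* ∈ ℝⁿ. The function y ↦ μ‖y‖₂ + (1/2)‖y − x*‖₂² has a unique global minimizer y*, given by y* = 0 if ‖x*‖₂ ≤ μ, and y* = (1 − μ/‖x*‖₂) · x* if ‖x*‖₂ > μ. -/
/-!
The objective is the convex `μ‖·‖` plus the `1`-strongly convex `½‖· - x*‖²`, hence strictly
convex, so it has at most one minimizer. That the shrinkage point is a minimizer reduces, by the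
reverse triangle inequality `(‖y‖ - ‖x*‖)² ≤ ‖y - x*‖²`, to minimizing the scalar function
`r ↦ μ r + ½ (r - ‖x*‖)²` over `r ≥ 0`, whose minimum sits at `r = max (‖x*‖ - μ) 0`; the
shrinkage point has this norm and attains the bound with equality.
-/

open Set

section Prox

variable {E : Type*} [NormedAddCommGroup E] [InnerProductSpace ℝ E]

noncomputable def blockSoftThreshold (μ : ℝ) (x : E) : E :=
  if ‖x‖ ≤ μ then 0 else (1 - μ / ‖x‖) • x

lemma strongConvexOn_half_norm_sub_sq (x : E) :
    StrongConvexOn univ 1 fun y : E ↦ 1 / 2 * ‖y - x‖ ^ 2 := by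
  rw [strongConvexOn_iff_convex]
  have haffine : (fun y : E ↦ 1 / 2 * ‖y - x‖ ^ 2 - 1 / 2 * ‖y‖ ^ 2) =
      fun y ↦ (-innerₛₗ ℝ x) y + 1 / 2 * ‖x‖ ^ 2 := by
    ext y
    simp only [LinearMap.neg_apply, innerₛₗ_apply_apply, norm_sub_sq_real, real_inner_comm x y]
    ring
  rw [haffine]
  exact ((-innerₛₗ ℝ x).convexOn convex_univ).add (convexOn_const _ convex_univ)

lemma strictConvexOn_prox_objective {μ : ℝ} (hμ : 0 ≤ μ) (x : E) :
    StrictConvexOn ℝ univ fun y : E ↦ μ * ‖y‖ + 1 / 2 * ‖y - x‖ ^ 2 :=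
  ((convexOn_norm convex_univ).smul hμ).add_strictConvexOn
    ((strongConvexOn_half_norm_sub_sq x).strictConvexOn one_pos)

lemma isMinOn_blockSoftThreshold {μ : ℝ} (hμ : 0 ≤ μ) (x : E) :
    IsMinOn (fun y : E ↦ μ * ‖y‖ + 1 / 2 * ‖y - x‖ ^ 2) univ (blockSoftThreshold μ x) := by
  refine isMinOn_univ_iff.mpr fun y ↦ ?_
  have hrev : (‖y‖ - ‖x‖) ^ 2 ≤ ‖y - x‖ ^ 2 := by
    rw [← sq_abs]
    gcongr
    exact abs_norm_sub_norm_le y x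
  unfold blockSoftThreshold
  split_ifs with hx
  · simp only [norm_zero, mul_zero, zero_sub, norm_neg, zero_add] at hrev ⊢
    nlinarith [norm_nonneg y]
  · replace hx := not_le.mp hx
    have hx0 : 0 < ‖x‖ := hμ.trans_lt hx
    have hc : 0 ≤ 1 - μ / ‖x‖ := by
      rw [sub_nonneg, div_le_one hx0]; exact hx.le
    have hnorm : ‖(1 - μ / ‖x‖) • x‖ = ‖x‖ - μ := by
      rw [norm_smul, Real.norm_of_nonneg hc]; field_simp
    have hresidual : ‖(1 - μ / ‖x‖) • x - x‖ = μ := by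
      rw [sub_smul, one_smul, sub_sub_cancel_left, norm_neg, norm_smul,
        Real.norm_of_nonneg (by positivity)]
      field_simp
    rw [hnorm, hresidual]
    nlinarith [sq_nonneg (‖y‖ - ‖x‖ + μ)]

end Prox

/-- The proximal mapping of `μ‖·‖₂` is the block soft-thresholding (shrinkage) operator. -/
theorem stmt_7 {n : ℕ} (μ : ℝ) (hμ : 0 < μ) (xstar : EuclideanSpace ℝ (Fin n))
    (g : EuclideanSpace ℝ (Fin n) → ℝ)
    (hg : ∀ y, g y = μ * ‖y‖ + 1 / 2 * ‖y - xstar‖ ^ 2)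
    (ystar : EuclideanSpace ℝ (Fin n))
    (hystar : ystar = if ‖xstar‖ ≤ μ then 0 else (1 - μ / ‖xstar‖) • xstar) :
    (∀ y, g ystar ≤ g y) ∧ ∀ y : EuclideanSpace ℝ (Fin n), (∀ z, g y ≤ g z) → y = ystar := by
  obtain rfl : g = fun y ↦ μ * ‖y‖ + 1 / 2 * ‖y - xstar‖ ^ 2 := funext hg
  obtain rfl : ystar = blockSoftThreshold μ xstar := hystar
  have hmin := isMinOn_blockSoftThreshold hμ.le xstar
  exact ⟨fun y ↦ hmin (mem_univ y), fun y hy ↦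
    (strictConvexOn_prox_objective hμ.le xstar).eq_of_isMinOn (fun z _ ↦ hy z) hmin trivial trivial⟩
end

section
/- Let n ∈ ℕ, μ > 0 and x* ∈ ℝⁿ. Let B₁(μ) := {y ∈ ℝⁿ : ‖y‖₁ ≤ μ}, a nonempty closed convex set, and let p* ∈ B₁(μ) be the (unique) point of B₁(μ) nearest to x* in the Euclidean norm, i.e., p* ∈ B₁(μ) and ‖x* − p*‖₂ ≤ ‖x* − y‖₂ for all y ∈ B₁(μ). Then x* − p* is the unique global minimizer of the function y ↦ μ‖y‖∞ + (1/2)‖y − x*‖₂². -/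
noncomputable def linfNorm {n : ℕ} (x : Fin n → ℝ) : ℝ :=
  ‖(WithLp.equiv ⊤ (Fin n → ℝ)).symm x‖

open RealInnerProductSpace

section Projection

variable {E : Type*} [NormedAddCommGroup E] [InnerProductSpace ℝ E]

theorem real_inner_sub_nearest_le_zero {K : Set E} (hK : Convex ℝ K) {x p : E} (hp : p ∈ K)
    (hmin : ∀ y ∈ K, ‖x - p‖ ≤ ‖x - y‖) {w : E} (hw : w ∈ K) : ⟪x - p, w - p⟫ ≤ 0 := by
  have : Nonempty K := ⟨⟨p, hp⟩⟩
  refine (norm_eq_iInf_iff_real_inner_le_zero hK hp).mp ?_ w hw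
  exact le_antisymm (le_ciInf fun y => hmin y y.2)
    (ciInf_le ⟨0, by rintro _ ⟨y, rfl⟩; exact norm_nonneg _⟩ (⟨p, hp⟩ : K))

theorem add_half_norm_sub_sq_le_of_subgradient {h : E → ℝ} {x u : E}
    (hsub : ∀ y, h u + ⟪y - u, x - u⟫ ≤ h y) (y : E) :
    h u + 1 / 2 * ‖u - x‖ ^ 2 + 1 / 2 * ‖y - u‖ ^ 2 ≤ h y + 1 / 2 * ‖y - x‖ ^ 2 := by
  have hexpand : ‖y - x‖ ^ 2 = ‖y - u‖ ^ 2 - 2 * ⟪y - u, x - u⟫ + ‖x - u‖ ^ 2 := by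
    rw [← norm_sub_sq_real, sub_sub_sub_cancel_right]
  rw [hexpand, norm_sub_rev u x]
  linarith [hsub y]

end Projection

section Norms

variable {n : ℕ}

theorem l1Norm_nonneg (x : Fin n → ℝ) : 0 ≤ l1Norm x :=
  Finset.sum_nonneg fun i _ => abs_nonneg (x i)

theorem convexOn_l1Norm : ConvexOn ℝ Set.univ (l1Norm (n := n)) := by
  refine ⟨convex_univ, fun a _ b _ s t hs ht _ => ?_⟩
  simp only [l1Norm, smul_eq_mul, Finset.mul_sum, ← Finset.sum_add_distrib]
  refine Finset.sum_le_sum fun i _ => ?_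
  calc |s * a i + t * b i| ≤ |s * a i| + |t * b i| := abs_add_le _ _
    _ = s * |a i| + t * |b i| := by rw [abs_mul, abs_mul, abs_of_nonneg hs, abs_of_nonneg ht]

theorem convex_l1Norm_le (μ : ℝ) : Convex ℝ {z : EuclideanSpace ℝ (Fin n) | l1Norm z ≤ μ} := by
  simpa using (convexOn_l1Norm.convex_le μ).linear_preimage
    (WithLp.linearEquiv 2 ℝ (Fin n → ℝ)).toLinearMap

theorem l1Norm_single (i : Fin n) (a : ℝ) : l1Norm (EuclideanSpace.single i a) = |a| := by
  simp [l1Norm, PiLp.single_apply, apply_ite]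

theorem linfNorm_eq_ciSup (x : Fin n → ℝ) : linfNorm x = ⨆ i, |x i| := by
  simp [linfNorm, PiLp.norm_eq_ciSup, Real.norm_eq_abs]

theorem abs_le_linfNorm (x : Fin n → ℝ) (i : Fin n) : |x i| ≤ linfNorm x := by
  rw [linfNorm_eq_ciSup]
  exact le_ciSup (Set.finite_range fun j => |x j|).bddAbove i

theorem linfNorm_nonneg (x : Fin n → ℝ) : 0 ≤ linfNorm x := norm_nonneg _

theorem exists_abs_eq_linfNorm [NeZero n] (x : Fin n → ℝ) : ∃ i, |x i| = linfNorm x := by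
  obtain ⟨i, hi⟩ := Finite.exists_max fun j : Fin n => |x j|
  exact ⟨i, le_antisymm (abs_le_linfNorm x i) (linfNorm_eq_ciSup x ▸ ciSup_le hi)⟩

theorem real_inner_le_linfNorm_mul_l1Norm (x y : EuclideanSpace ℝ (Fin n)) :
    ⟪x, y⟫ ≤ linfNorm x * l1Norm y := by
  have hsum : ⟪x, y⟫ = ∑ i, x i * y i := by
    simp [PiLp.inner_apply, mul_comm]
  rw [hsum, l1Norm, Finset.mul_sum]
  refine Finset.sum_le_sum fun i _ => ?_
  calc x i * y i ≤ |x i| * |y i| := abs_mul (x i) (y i) ▸ le_abs_self _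
    _ ≤ linfNorm x * |y i| := mul_le_mul_of_nonneg_right (abs_le_linfNorm x i) (abs_nonneg _)

theorem exists_l1Norm_le_real_inner_eq {μ : ℝ} (hμ : 0 ≤ μ) (x : EuclideanSpace ℝ (Fin n)) :
    ∃ z : EuclideanSpace ℝ (Fin n), l1Norm z ≤ μ ∧ ⟪x, z⟫ = μ * linfNorm x := by
  rcases Nat.eq_zero_or_pos n with rfl | hn
  · refine ⟨0, by simp [l1Norm, hμ], ?_⟩
    rw [Subsingleton.elim x 0]
    simp [linfNorm]
  have : NeZero n := ⟨hn.ne'⟩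
  obtain ⟨i, hi⟩ := exists_abs_eq_linfNorm x
  have hsign : |(SignType.sign (x i) : ℝ)| ≤ 1 := by
    rcases SignType.sign (x i) with _ | _ | _ <;> simp
  refine ⟨EuclideanSpace.single i (μ * SignType.sign (x i)), ?_, ?_⟩
  · rw [l1Norm_single, abs_mul, abs_of_nonneg hμ]
    exact mul_le_of_le_one_right hμ hsign
  · rw [EuclideanSpace.inner_single_right, ← hi, ← self_mul_sign]
    simp only [conj_trivial]
    ring

end Norms

theorem stmt_8_general {n : ℕ} (μ : ℝ) (xstar : EuclideanSpace ℝ (Fin n))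
    (g : EuclideanSpace ℝ (Fin n) → ℝ)
    (hg : ∀ y, g y = μ * linfNorm y + 1 / 2 * ‖y - xstar‖ ^ 2)
    (pstar : EuclideanSpace ℝ (Fin n))
    (hp1 : l1Norm pstar ≤ μ)
    (hp2 : ∀ y : EuclideanSpace ℝ (Fin n), l1Norm y ≤ μ → ‖xstar - pstar‖ ≤ ‖xstar - y‖) :
    (∀ y, g (xstar - pstar) ≤ g y) ∧
      ∀ y : EuclideanSpace ℝ (Fin n), (∀ z, g y ≤ g z) → y = xstar - pstar := by
  set u := xstar - pstar
  have hpu : xstar - u = pstar := sub_sub_cancel xstar pstar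
  have hdual (y : EuclideanSpace ℝ (Fin n)) : ⟪y, pstar⟫ ≤ μ * linfNorm y :=
    calc ⟪y, pstar⟫ ≤ linfNorm y * l1Norm pstar := real_inner_le_linfNorm_mul_l1Norm y pstar
      _ ≤ linfNorm y * μ := mul_le_mul_of_nonneg_left hp1 (linfNorm_nonneg y)
      _ = μ * linfNorm y := mul_comm _ _
  have hattain : μ * linfNorm u ≤ ⟪u, pstar⟫ := by
    obtain ⟨z, hz, hzu⟩ := exists_l1Norm_le_real_inner_eq ((l1Norm_nonneg _).trans hp1) u
    have := real_inner_sub_nearest_le_zero (convex_l1Norm_le μ) hp1 hp2 hz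
    rw [inner_sub_right, hzu] at this
    linarith
  have hgrowth (y) : g u + 1 / 2 * ‖y - u‖ ^ 2 ≤ g y := by
    rw [hg, hg]
    refine add_half_norm_sub_sq_le_of_subgradient
      (h := fun y : EuclideanSpace ℝ (Fin n) => μ * linfNorm y) (fun y => ?_) y
    rw [hpu, inner_sub_left]
    linarith [hdual y]
  refine ⟨fun y => (le_add_of_nonneg_right (by positivity)).trans (hgrowth y), fun y hy => ?_⟩
  have : ‖y - u‖ ^ 2 ≤ 0 := by linarith [hgrowth y, hy u]
  simpa [sub_eq_zero] using this

/-- Moreau decomposition for the `ℓ∞`-norm: `Prox_{μ‖·‖∞}(x*) = x* − Π_{B₁(μ)}(x*)`. -/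
theorem stmt_8 {n : ℕ} (μ : ℝ) (hμ : 0 < μ) (xstar : EuclideanSpace ℝ (Fin n))
    (g : EuclideanSpace ℝ (Fin n) → ℝ)
    (hg : ∀ y, g y = μ * linfNorm y + 1 / 2 * ‖y - xstar‖ ^ 2)
    (pstar : EuclideanSpace ℝ (Fin n))
    (hp1 : l1Norm pstar ≤ μ)
    (hp2 : ∀ y : EuclideanSpace ℝ (Fin n), l1Norm y ≤ μ → ‖xstar - pstar‖ ≤ ‖xstar - y‖) :
    (∀ y, g (xstar - pstar) ≤ g y) ∧
      ∀ y : EuclideanSpace ℝ (Fin n), (∀ z, g y ≤ g z) → y = xstar - pstar :=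
  stmt_8_general μ xstar g hg pstar hp1 hp2
end

section
/- Let n ∈ ℕ, μ > 0 and x* ∈ ℝⁿ with ‖x*‖₁ > μ. Let Δₙ := {y ∈ ℝⁿ : ∑ᵢ yᵢ = 1 and yᵢ ≥ 0 for all i} be the standard simplex, and let s ∈ Δₙ be the (unique) point of Δₙ nearest in Euclidean norm to the vector (|x*₁|/μ, …, |x*ₙ|/μ). Then the point of B₁(μ) := {y ∈ ℝⁿ : ‖y‖₁ ≤ μ} nearest in Euclidean norm to x* is the vector whose i-th component is μ · sign(x*ᵢ) · sᵢ. -/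
/-!
For `y ∈ B₁(μ)` put `u := (|yᵢ| / μ)ᵢ`; then `μ ‖z - u‖ ≤ ‖x* - y‖` by the reverse triangle
inequality in each coordinate, and `u` lies in the solid simplex `{u ≥ 0, ∑ uᵢ ≤ 1}`. Since
`∑ zᵢ = ‖x*‖₁ / μ > 1`, raising the coordinates of `u` that lie below `z` by a common fraction of
their gap lands at some `v ∈ Δₙ` without increasing any `|zᵢ - uᵢ|`. Hence
`‖x* - w‖ ≤ μ ‖z - s‖ ≤ μ ‖z - v‖ ≤ μ ‖z - u‖ ≤ ‖x* - y‖`, the first step because `w` carries the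
signs of `x*`.
-/

open Finset

lemma Real.abs_sign_le_one (r : ℝ) : |Real.sign r| ≤ 1 := by
  rcases Real.sign_apply_eq r with h | h | h <;> simp [h]

lemma Real.abs_sign_mul_le (r a : ℝ) : |Real.sign r * a| ≤ |a| := by
  rw [abs_mul]
  exact mul_le_of_le_one_left (abs_nonneg a) (Real.abs_sign_le_one r)

lemma Real.abs_sub_sign_mul_le (a c : ℝ) :
    |a - Real.sign a * c| ≤ |(|a| - c)| := by
  rcases lt_trichotomy a 0 with h | rfl | h
  · rw [Real.sign_of_neg h, abs_of_neg h, show a - -1 * c = -(-a - c) by ring, abs_neg]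
  · simp
  · rw [Real.sign_of_pos h, abs_of_pos h, one_mul]

lemma abs_sub_add_mul_max_sub_le {a b t : ℝ} (ht0 : 0 ≤ t) (ht1 : t ≤ 1) :
    |a - (b + t * max (a - b) 0)| ≤ |a - b| := by
  rcases le_total a b with h | h
  · simp [max_eq_right (sub_nonpos.2 h)]
  · rw [max_eq_left (sub_nonneg.2 h), show a - (b + t * (a - b)) = (1 - t) * (a - b) by ring,
      abs_mul, abs_of_nonneg (sub_nonneg.2 ht1)]
    exact mul_le_of_le_one_left (abs_nonneg _) (by linarith)

lemma exists_mem_stdSimplex_forall_abs_sub_le {ι : Type*} [Fintype ι] {z u : ι → ℝ}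
    (hz : 1 < ∑ i, z i) (hu : ∀ i, 0 ≤ u i) (hu1 : ∑ i, u i ≤ 1) :
    ∃ v ∈ stdSimplex ℝ ι, ∀ i, |z i - v i| ≤ |z i - u i| := by
  set gap := ∑ i, max (z i - u i) 0
  have hdeficit : 1 - ∑ i, u i < gap := calc
    1 - ∑ i, u i < ∑ i, z i - ∑ i, u i := by linarith
    _ = ∑ i, (z i - u i) := (sum_sub_distrib ..).symm
    _ ≤ gap := sum_le_sum fun i _ => le_max_left _ _
  have hgap : 0 < gap := by linarith
  set t := (1 - ∑ i, u i) / gap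
  have ht0 : 0 ≤ t := div_nonneg (by linarith) hgap.le
  have ht1 : t ≤ 1 := (div_le_one hgap).2 hdeficit.le
  refine ⟨fun i => u i + t * max (z i - u i) 0, ⟨fun i => ?_, ?_⟩,
    fun i => abs_sub_add_mul_max_sub_le ht0 ht1⟩
  · exact add_nonneg (hu i) (mul_nonneg ht0 (le_max_right _ _))
  · rw [sum_add_distrib, ← mul_sum, div_mul_cancel₀ _ hgap.ne']
    ring

lemma EuclideanSpace.norm_le_norm_of_forall_abs_le {ι : Type*} [Fintype ι]
    {x y : EuclideanSpace ℝ ι} (h : ∀ i, |x i| ≤ |y i|) : ‖x‖ ≤ ‖y‖ := by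
  rw [EuclideanSpace.norm_eq, EuclideanSpace.norm_eq]
  gcongr with i
  exact h i

lemma l1Norm_le_of_forall_abs_le_mul {n : ℕ} {μ : ℝ} {w s : Fin n → ℝ}
    (hw : ∀ i, |w i| ≤ μ * s i) (hs : ∑ i, s i = 1) : l1Norm w ≤ μ := calc
  l1Norm w ≤ ∑ i, μ * s i := sum_le_sum fun i _ => hw i
  _ = μ := by rw [← mul_sum, hs, mul_one]

/-- Projection onto the `ℓ₁`-ball of radius `μ` via projection onto the standard simplex:
if `‖x*‖₁ > μ` and `s` is the nearest point of the simplex to `(|x*ᵢ|/μ)ᵢ`, then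
`(μ · sign(x*ᵢ) · sᵢ)ᵢ` is the nearest point of `B₁(μ)` to `x*`. -/
theorem stmt_9 {n : ℕ} (μ : ℝ) (hμ : 0 < μ) (xstar : EuclideanSpace ℝ (Fin n))
    (hx : l1Norm xstar > μ)
    (z : EuclideanSpace ℝ (Fin n)) (hz : ∀ i, z i = |xstar i| / μ)
    (s : EuclideanSpace ℝ (Fin n))
    (hs1 : (∑ i, s i) = 1 ∧ ∀ i, 0 ≤ s i)
    (hs2 : ∀ y : EuclideanSpace ℝ (Fin n), ((∑ i, y i) = 1 ∧ ∀ i, 0 ≤ y i) →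
      ‖z - s‖ ≤ ‖z - y‖)
    (w : EuclideanSpace ℝ (Fin n))
    (hw : ∀ i, w i = μ * Real.sign (xstar i) * s i) :
    l1Norm w ≤ μ ∧
      ∀ y : EuclideanSpace ℝ (Fin n), l1Norm y ≤ μ → ‖xstar - w‖ ≤ ‖xstar - y‖ := by
  obtain ⟨hs_sum, hs_nonneg⟩ := hs1
  have hw' : ∀ i, w i = Real.sign (xstar i) * (μ * s i) := fun i => by rw [hw]; ring
  have hμs : ∀ i, 0 ≤ μ * s i := fun i => mul_nonneg hμ.le (hs_nonneg i)
  refine ⟨l1Norm_le_of_forall_abs_le_mul (fun i => ?_) hs_sum, fun y hy => ?_⟩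
  · rw [hw' i]
    exact (Real.abs_sign_mul_le _ _).trans_eq (abs_of_nonneg (hμs i))
  set u : EuclideanSpace ℝ (Fin n) := WithLp.toLp 2 fun i => |y i| / μ
  have hz_sum : 1 < ∑ i, z i := by
    rwa [sum_congr rfl fun i _ => hz i, ← sum_div, one_lt_div hμ]
  have hu_sum : ∑ i, u i ≤ 1 := by
    rwa [← sum_div, div_le_one hμ]
  obtain ⟨v, ⟨hv_nonneg, hv_sum⟩, hv⟩ :=
    exists_mem_stdSimplex_forall_abs_sub_le hz_sum (fun i => by positivity) hu_sum
  calc ‖xstar - w‖ ≤ ‖μ • (z - s)‖ :=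
        EuclideanSpace.norm_le_norm_of_forall_abs_le fun i => by
          have hμz : μ * (z i - s i) = |xstar i| - μ * s i := by
            rw [hz]; field_simp
          simpa [hw', hμz] using Real.abs_sub_sign_mul_le (xstar i) (μ * s i)
    _ = μ * ‖z - s‖ := norm_smul_of_nonneg hμ.le _
    _ ≤ μ * ‖z - WithLp.toLp 2 v‖ := by gcongr; exact hs2 _ ⟨hv_sum, hv_nonneg⟩
    _ = ‖μ • (z - WithLp.toLp 2 v)‖ := (norm_smul_of_nonneg hμ.le _).symm
    _ ≤ ‖μ • (z - u)‖ :=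
        EuclideanSpace.norm_le_norm_of_forall_abs_le fun i => by
          simpa [abs_mul, abs_of_pos hμ] using mul_le_mul_of_nonneg_left (hv i) hμ.le
    _ ≤ ‖xstar - y‖ :=
        EuclideanSpace.norm_le_norm_of_forall_abs_le fun i => by
          have hμz : μ * (z i - u i) = |xstar i| - |y i| := by
            simp only [hz, u]; field_simp
          simpa [hμz] using abs_abs_sub_abs_le_abs_sub (xstar i) (y i)
end

section
/- Let m ∈ ℕ, let p, q ∈ [1, ∞] be conjugate exponents (1/p + 1/q = 1, with the convention 1/∞ = 0), let τ > 0 and û ∈ ℝᵐ. Then 0 is a global minimizer of the function y ↦ ‖y‖_p + (τ/2)‖y − û‖₂² if and only if ‖û‖_q ≤ 1/τ. Consequently, the unique global minimizer of this function is nonzero if and only if ‖û‖_q > 1/τ. -/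
/-! Write the objective as `N y + (τ/2)‖y - û‖²` with `N = ‖·‖_p` positively homogeneous.
Comparing its value at `0` with its values along the rays `t • x` and letting `t → 0⁺` shows that
`0` is a minimizer iff `τ ⟪x, û⟫ ≤ N x` for all `x`; by Hölder's inequality and its equality case
this says exactly that the dual norm `‖û‖_q` is at most `1/τ`. If `0` and `z` are both minimizers,
comparing `z` with `z / 2` forces `‖z‖ = 0`, which gives the second part. -/

open scoped ENNReal

open Finset Filter Topology

section LpNorm

variable {m : ℕ}

lemma lpNorm_nonneg (p : ℝ≥0∞) [Fact (1 ≤ p)] (x : Fin m → ℝ) : 0 ≤ lpNorm p x :=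
  norm_nonneg _

lemma lpNorm_smul (p : ℝ≥0∞) [Fact (1 ≤ p)] (t : ℝ) (x : Fin m → ℝ) :
    lpNorm p (t • x) = |t| * lpNorm p x := by
  simp [lpNorm, norm_smul]

lemma lpNorm_eq_sum {p : ℝ≥0∞} [Fact (1 ≤ p)] (hp : p ≠ ∞) (x : Fin m → ℝ) :
    lpNorm p x = (∑ i, |x i| ^ p.toReal) ^ (1 / p.toReal) := by
  have hp₀ : 0 < p.toReal := ENNReal.toReal_pos (one_pos.trans_le Fact.out).ne' hp
  simp [lpNorm, PiLp.norm_eq_sum hp₀]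

lemma lpNorm_one (x : Fin m → ℝ) : lpNorm 1 x = ∑ i, |x i| := by
  simp [lpNorm_eq_sum]

lemma abs_le_lpNorm (p : ℝ≥0∞) [Fact (1 ≤ p)] (x : Fin m → ℝ) (i : Fin m) :
    |x i| ≤ lpNorm p x :=
  PiLp.norm_apply_le (WithLp.toLp p x) i

lemma lpNorm_top_le {x : Fin m → ℝ} {c : ℝ} (hc : 0 ≤ c) (hx : ∀ i, |x i| ≤ c) :
    lpNorm ∞ x ≤ c := by
  rw [lpNorm, PiLp.norm_eq_ciSup]
  exact Real.iSup_le hx hc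

lemma lpNorm_single (p : ℝ≥0∞) [Fact (1 ≤ p)] (i : Fin m) (a : ℝ) :
    lpNorm p (Pi.single i a) = |a| := by
  rw [lpNorm, WithLp.equiv_symm_apply, PiLp.toLp_single, PiLp.norm_single, Real.norm_eq_abs]

end LpNorm

lemma abs_sign_le_one (x : ℝ) : |(SignType.sign x : ℝ)| ≤ 1 := by
  cases SignType.sign x <;> simp

section Holder

variable {m : ℕ}

lemma sum_mul_le_lpNorm_one_mul_lpNorm_top (x u : Fin m → ℝ) :
    ∑ i, x i * u i ≤ lpNorm 1 x * lpNorm ∞ u := by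
  rw [lpNorm_one, sum_mul]
  refine sum_le_sum fun i _ => ?_
  calc x i * u i ≤ |x i| * |u i| := by rw [← abs_mul]; exact le_abs_self _
    _ ≤ |x i| * lpNorm ∞ u := by gcongr; exact abs_le_lpNorm ∞ u i

theorem sum_mul_le_lpNorm_mul_lpNorm {p q : ℝ≥0∞} [Fact (1 ≤ p)] [Fact (1 ≤ q)]
    [p.HolderConjugate q] (x u : Fin m → ℝ) :
    ∑ i, x i * u i ≤ lpNorm p x * lpNorm q u := by
  by_cases hq : q = ∞
  · obtain rfl : p = 1 := (ENNReal.HolderConjugate.eq_top_iff_eq_one q p).mp hq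
    subst hq
    exact sum_mul_le_lpNorm_one_mul_lpNorm_top x u
  by_cases hp : p = ∞
  · obtain rfl : q = 1 := (ENNReal.HolderConjugate.eq_top_iff_eq_one p q).mp hp
    subst hp
    simpa only [mul_comm] using sum_mul_le_lpNorm_one_mul_lpNorm_top u x
  rw [lpNorm_eq_sum hp, lpNorm_eq_sum hq]
  exact Real.inner_le_Lp_mul_Lq _ _ _ (ENNReal.HolderConjugate.toReal_of_ne_top hp hq)

end Holder

section Duality

variable {m : ℕ} {u : Fin m → ℝ} {c : ℝ}

lemma lpNorm_top_le_of_forall_sum_mul_le (p : ℝ≥0∞) [Fact (1 ≤ p)] (hc : 0 ≤ c)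
    (h : ∀ x, ∑ i, x i * u i ≤ c * lpNorm p x) : lpNorm ∞ u ≤ c := by
  refine lpNorm_top_le hc fun i => ?_
  let e : Fin m → ℝ := Pi.single i (SignType.sign (u i) : ℝ)
  calc |u i| = ∑ j, e j * u j := by simp [e, Pi.single_apply, sign_mul_self]
    _ ≤ c * lpNorm p e := h e
    _ = c * |(SignType.sign (u i) : ℝ)| := by rw [lpNorm_single]
    _ ≤ c := mul_le_of_le_one_right hc (abs_sign_le_one _)

lemma lpNorm_one_le_of_forall_sum_mul_le (hc : 0 ≤ c)
    (h : ∀ x, ∑ i, x i * u i ≤ c * lpNorm ∞ x) : lpNorm 1 u ≤ c := by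
  calc lpNorm 1 u = ∑ i, (SignType.sign (u i) : ℝ) * u i := by
        simp [lpNorm_one, sign_mul_self]
    _ ≤ c * lpNorm ∞ (fun i => (SignType.sign (u i) : ℝ)) := h _
    _ ≤ c := mul_le_of_le_one_right hc (lpNorm_top_le zero_le_one fun i => abs_sign_le_one _)

lemma lpNorm_le_of_forall_sum_mul_le_of_ne_top {p q : ℝ≥0∞} [Fact (1 ≤ p)] [Fact (1 ≤ q)]
    [p.HolderConjugate q] (hp : p ≠ ∞) (hq : q ≠ ∞) (hc : 0 ≤ c)
    (h : ∀ x, ∑ i, x i * u i ≤ c * lpNorm p x) : lpNorm q u ≤ c := by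
  have hpq := ENNReal.HolderConjugate.toReal_of_ne_top hp hq
  obtain ⟨g, hg, hgu⟩ := (NNReal.isGreatest_Lp univ (fun i => ‖u i‖₊) hpq.symm).1
  simp only [Set.mem_ofPred_eq] at hg
  have hgu' := congrArg NNReal.toReal hgu
  push_cast [Real.norm_eq_abs] at hgu'
  let x : Fin m → ℝ := fun i => SignType.sign (u i) * g i
  have hx : lpNorm p x ≤ 1 := by
    rw [lpNorm_eq_sum hp]
    refine Real.rpow_le_one (by positivity) ?_ (by positivity)
    calc ∑ i, |x i| ^ p.toReal ≤ ∑ i, (g i : ℝ) ^ p.toReal := by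
          gcongr with i
          rw [abs_mul, NNReal.abs_eq]
          exact mul_le_of_le_one_left (g i).2 (abs_sign_le_one _)
      _ ≤ 1 := by exact_mod_cast hg
  calc lpNorm q u = ∑ i, x i * u i := by
        rw [lpNorm_eq_sum hq, ← hgu']
        refine sum_congr rfl fun i _ => ?_
        rw [← sign_mul_self]
        ring
    _ ≤ c * lpNorm p x := h x
    _ ≤ c := mul_le_of_le_one_right hc hx

theorem lpNorm_le_iff_forall_sum_mul_le {p q : ℝ≥0∞} [Fact (1 ≤ p)] [Fact (1 ≤ q)]
    [p.HolderConjugate q] (hc : 0 ≤ c) :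
    lpNorm q u ≤ c ↔ ∀ x, ∑ i, x i * u i ≤ c * lpNorm p x := by
  refine ⟨fun hu x => ?_, fun h => ?_⟩
  · calc ∑ i, x i * u i ≤ lpNorm p x * lpNorm q u := sum_mul_le_lpNorm_mul_lpNorm x u
      _ ≤ c * lpNorm p x := by rw [mul_comm]; gcongr; exact lpNorm_nonneg p x
  by_cases hq : q = ∞
  · subst hq
    exact lpNorm_top_le_of_forall_sum_mul_le p hc h
  by_cases hp : p = ∞
  · obtain rfl : q = 1 := (ENNReal.HolderConjugate.eq_top_iff_eq_one p q).mp hp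
    subst hp
    exact lpNorm_one_le_of_forall_sum_mul_le hc h
  exact lpNorm_le_of_forall_sum_mul_le_of_ne_top hp hq hc h

end Duality

lemma le_of_forall_pos_le_add_mul {a b c : ℝ} (h : ∀ t > 0, a ≤ b + t * c) : a ≤ b := by
  have hlim : Tendsto (fun t : ℝ => b + t * c) (𝓝[>] 0) (𝓝 b) := by
    have : Tendsto (fun t : ℝ => b + t * c) (𝓝 0) (𝓝 (b + 0 * c)) :=
      tendsto_const_nhds.add (tendsto_id.mul_const c)
    simpa using this.mono_left nhdsWithin_le_nhds
  exact ge_of_tendsto hlim (eventually_nhdsWithin_of_forall h)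

section Prox

variable {E : Type*} [NormedAddCommGroup E] [InnerProductSpace ℝ E]

noncomputable def proxObjective (N : E → ℝ) (τ : ℝ) (u y : E) : ℝ :=
  N y + τ / 2 * ‖y - u‖ ^ 2

variable {N : E → ℝ} {τ : ℝ} {u z : E}

lemma proxObjective_sub_proxObjective_zero (hN₀ : N 0 = 0) (y : E) :
    proxObjective N τ u y - proxObjective N τ u 0 =
      N y - τ * inner ℝ y u + τ / 2 * ‖y‖ ^ 2 := by
  simp only [proxObjective, hN₀, zero_sub, norm_neg, norm_sub_sq_real]
  ring

variable (hN : ∀ t : ℝ, 0 ≤ t → ∀ x, N (t • x) = t * N x)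
include hN

lemma map_zero_of_homogeneous : N 0 = 0 := by
  simpa using hN 0 le_rfl 0

theorem forall_proxObjective_zero_le_iff (hτ : 0 < τ) :
    (∀ y, proxObjective N τ u 0 ≤ proxObjective N τ u y) ↔ ∀ x, τ * inner ℝ x u ≤ N x := by
  have hD := proxObjective_sub_proxObjective_zero (τ := τ) (u := u) (map_zero_of_homogeneous hN)
  refine ⟨fun hmin x => le_of_forall_pos_le_add_mul (c := τ / 2 * ‖x‖ ^ 2) fun t ht => ?_,
    fun h y => ?_⟩
  · have h₁ := sub_nonneg.2 (hmin (t • x))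
    rw [hD, hN t ht.le, inner_smul_left, norm_smul, Real.norm_of_nonneg ht.le] at h₁
    simp only [conj_trivial] at h₁
    nlinarith
  · nlinarith [hD y, h y, sq_nonneg ‖y‖]

theorem eq_zero_of_forall_proxObjective_le (hτ : 0 < τ)
    (h₀ : ∀ y, proxObjective N τ u 0 ≤ proxObjective N τ u y)
    (hz : ∀ y, proxObjective N τ u z ≤ proxObjective N τ u y) : z = 0 := by
  have hD := proxObjective_sub_proxObjective_zero (τ := τ) (u := u) (map_zero_of_homogeneous hN)
  have hhalf := hD ((1 / 2 : ℝ) • z)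
  rw [hN _ (by norm_num), inner_smul_left, norm_smul, Real.norm_of_nonneg (by norm_num)] at hhalf
  simp only [conj_trivial] at hhalf
  have : ‖z‖ ^ 2 ≤ 0 := by nlinarith [hD z, h₀ z, hz 0, hz ((1 / 2 : ℝ) • z)]
  simpa using this

end Prox

/-- `0` minimizes `y ↦ ‖y‖_p + (τ/2)‖y − û‖₂²` iff `‖û‖_q ≤ 1/τ` for the conjugate
exponent `q`; hence the unique minimizer is nonzero iff `‖û‖_q > 1/τ`. -/
theorem stmt_15 {m : ℕ} (p q : ℝ≥0∞) [Fact (1 ≤ p)] [Fact (1 ≤ q)]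
    (hpq : 1 / p + 1 / q = 1) (τ : ℝ) (hτ : 0 < τ)
    (uhat : EuclideanSpace ℝ (Fin m))
    (g : EuclideanSpace ℝ (Fin m) → ℝ)
    (hg : ∀ y, g y = lpNorm p y + τ / 2 * ‖y - uhat‖ ^ 2) :
    ((∀ y, g 0 ≤ g y) ↔ lpNorm q uhat ≤ 1 / τ) ∧
      ∀ z : EuclideanSpace ℝ (Fin m), (∀ y, g z ≤ g y) →
        (z ≠ 0 ↔ 1 / τ < lpNorm q uhat) := by
  have : p.HolderConjugate q := ENNReal.holderConjugate_iff.2 (by simpa only [one_div] using hpq)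
  set N : EuclideanSpace ℝ (Fin m) → ℝ := fun y => lpNorm p y
  obtain rfl : g = proxObjective N τ uhat := funext hg
  have hN : ∀ t : ℝ, 0 ≤ t → ∀ y, N (t • y) = t * N y := fun t ht y => by
    simp only [N, WithLp.ofLp_smul, lpNorm_smul, abs_of_nonneg ht]
  have hzero : (∀ y, proxObjective N τ uhat 0 ≤ proxObjective N τ uhat y) ↔
      lpNorm q uhat ≤ 1 / τ := by
    rw [forall_proxObjective_zero_le_iff hN hτ,
      lpNorm_le_iff_forall_sum_mul_le (p := p) (by positivity)]
    refine (WithLp.equiv 2 _).forall_congr fun x => ?_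
    rw [WithLp.equiv_apply, one_div_mul_eq_div, le_div_iff₀' hτ]
    simp [N, PiLp.inner_apply, mul_comm]
  refine ⟨hzero, fun z hz => ⟨fun hz₀ => ?_, fun hlt hz₀ => ?_⟩⟩
  · exact lt_of_not_ge fun hle => hz₀ (eq_zero_of_forall_proxObjective_le hN hτ (hzero.2 hle) hz)
  · subst hz₀
    exact hlt.not_ge (hzero.1 hz)
end

section
/- Let m ∈ ℕ, let p, q ∈ [1, ∞] be conjugate exponents (1/p + 1/q = 1, with the convention 1/∞ = 0), let τ > 0 and û ∈ ℝᵐ. Let Π be the (unique) point of the closed unit ℓ_q-ball B_q := {y ∈ ℝᵐ : ‖y‖_q ≤ 1} nearest in Euclidean norm to τ·û. Then the unique global minimizer of y ↦ τ⁻¹‖y‖_p + (1/2)‖y − û‖₂² equals û − τ⁻¹·Π; that is, Prox_{τ⁻¹‖·‖_p}(û) = û − τ⁻¹·Π_{B_q}(τ·û). -/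
open scoped ENNReal

/-!
By Hölder's inequality and its equality case, `‖·‖_p` is the support function of the unit
`ℓ_q`-ball `B`: `‖y‖_p = max_{w ∈ B} ⟪w, y⟫`. The variational inequality of the projection `Π` of
`τ û` onto `B` says that `Π` maximizes `⟪·, τ û - Π⟫` on `B`, hence `⟪Π, z⟫ = ‖z‖_p` for
`z = û - τ⁻¹ Π`, while `⟪Π, ·⟫ ≤ ‖·‖_p` everywhere. So `Π` is a subgradient of `‖·‖_p` at `z`,
which is the optimality condition of the prox problem; its objective is strongly convex, so `z`
is the unique minimizer.
-/

open scoped NNReal InnerProductSpace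

section Moreau

variable {E : Type*} [NormedAddCommGroup E] [InnerProductSpace ℝ E]

theorem real_inner_sub_le_zero_of_forall_norm_sub_le {K : Set E} (hK : Convex ℝ K) {v π : E}
    (hπ : π ∈ K) (hmin : ∀ w ∈ K, ‖v - π‖ ≤ ‖v - w‖) : ∀ w ∈ K, ⟪v - π, w - π⟫_ℝ ≤ 0 := by
  have : Nonempty K := ⟨⟨π, hπ⟩⟩
  rw [← norm_eq_iInf_iff_real_inner_le_zero hK hπ]
  have hbdd : BddBelow (Set.range fun w : K => ‖v - w‖) :=
    ⟨0, by rintro _ ⟨w, rfl⟩; exact norm_nonneg _⟩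
  exact le_antisymm (le_ciInf fun w => hmin w w.2) (ciInf_le hbdd ⟨π, hπ⟩)

/-- The hypotheses say that `w` is a subgradient of `N` at `u - c • w`. -/
theorem add_half_sq_norm_sub_le_of_inner_le {N : E → ℝ} {c : ℝ} (hc : 0 ≤ c) {u w : E}
    (hw : ∀ y, ⟪w, y⟫_ℝ ≤ N y) (hwz : N (u - c • w) ≤ ⟪w, u - c • w⟫_ℝ) (y : E) :
    c * N (u - c • w) + 1 / 2 * ‖u - c • w - u‖ ^ 2 + 1 / 2 * ‖y - (u - c • w)‖ ^ 2 ≤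
      c * N y + 1 / 2 * ‖y - u‖ ^ 2 := by
  set z := u - c • w
  have hexpand : ‖y - u‖ ^ 2 = ‖y - z‖ ^ 2 - 2 * c * (⟪w, y⟫_ℝ - ⟪w, z⟫_ℝ) + ‖z - u‖ ^ 2 := by
    have hzu : z - u = -(c • w) := by simp [z]
    rw [show y - u = (y - z) + (z - u) by abel, norm_add_sq_real, hzu, inner_neg_right,
      real_inner_smul_right, real_inner_comm, inner_sub_right]
    ring
  nlinarith [mul_nonneg hc (sub_nonneg.mpr (hw y)), mul_nonneg hc (sub_nonneg.mpr hwz)]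

theorem Convex.moreau_decomposition {K : Set E} (hK : Convex ℝ K) {N : E → ℝ}
    (hN : ∀ y, IsGreatest ((⟪·, y⟫_ℝ) '' K) (N y)) {τ : ℝ} (hτ : 0 < τ) {u π : E} (hπ : π ∈ K)
    (hmin : ∀ w ∈ K, ‖τ • u - π‖ ≤ ‖τ • u - w‖) (f : E → ℝ)
    (hf : ∀ y, f y = τ⁻¹ * N y + 1 / 2 * ‖y - u‖ ^ 2) :
    (∀ y, f (u - τ⁻¹ • π) ≤ f y) ∧ ∀ z, (∀ y, f z ≤ f y) → z = u - τ⁻¹ • π := by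
  set z := u - τ⁻¹ • π
  have hsub (y : E) : ⟪π, y⟫_ℝ ≤ N y := (hN y).2 ⟨π, hπ, rfl⟩
  have hattain : N z ≤ ⟪π, z⟫_ℝ := by
    obtain ⟨w, hw, hwz⟩ := (hN z).1
    have hvar := real_inner_sub_le_zero_of_forall_norm_sub_le hK hπ hmin w hw
    have hτz : τ • u - π = τ • z := by simp [z, smul_sub, smul_smul, hτ.ne']
    rw [hτz, real_inner_smul_left, inner_sub_right, real_inner_comm w, real_inner_comm π] at hvar
    rw [← hwz]
    exact sub_nonpos.mp (nonpos_of_mul_nonpos_right hvar hτ)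
  have hgrowth (y : E) : f z + 1 / 2 * ‖y - z‖ ^ 2 ≤ f y := by
    rw [hf, hf]
    linarith [add_half_sq_norm_sub_le_of_inner_le (inv_nonneg.2 hτ.le) hsub hattain y]
  refine ⟨fun y => by linarith [hgrowth y, sq_nonneg ‖y - z‖], fun z' hz' => ?_⟩
  have hzero : ‖z' - z‖ ^ 2 ≤ 0 := by linarith [hgrowth z', hz' z]
  rw [← sub_eq_zero, ← norm_eq_zero]
  exact pow_eq_zero_iff two_ne_zero |>.mp (le_antisymm hzero (sq_nonneg _))

end Moreau

theorem SignType.abs_coe_le_one {α : Type*} [Ring α] [LinearOrder α] [IsStrictOrderedRing α]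
    (s : SignType) : |(s : α)| ≤ 1 := by
  cases s <;> simp

section Holder

variable {ι : Type*} [Fintype ι] {p q : ℝ≥0∞} [Fact (1 ≤ p)] [Fact (1 ≤ q)]

theorem PiLp.sum_mul_le_norm_mul_norm [q.HolderConjugate p] (w : PiLp q (fun _ : ι => ℝ))
    (x : PiLp p (fun _ : ι => ℝ)) : ∑ i, w i * x i ≤ ‖w‖ * ‖x‖ := by
  have hB : ∀ _ : ι, ‖ContinuousLinearMap.mul ℝ ℝ‖ ≤ (1 : ℝ≥0) := fun _ => by simp
  let e := (lpPiLpₗᵢ (fun _ : ι => ℝ) ℝ (p := q)).symm w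
  let f := (lpPiLpₗᵢ (fun _ : ι => ℝ) ℝ (p := p)).symm x
  have hpair := (lp.dualPairing q p _ hB).le_opNorm₂ e f
  rw [lp.dualPairing_apply, tsum_fintype] at hpair
  simp only [e, f, LinearIsometryEquiv.norm_map, coe_lpPiLpₗᵢ_symm,
    ContinuousLinearMap.mul_apply'] at hpair
  calc ∑ i, w i * x i ≤ _ := (le_abs_self _).trans hpair
    _ ≤ 1 * ‖w‖ * ‖x‖ := by
      gcongr
      exact_mod_cast lp.norm_dualPairing (p := q) (q := p) _ hB
    _ = ‖w‖ * ‖x‖ := by rw [one_mul]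

theorem PiLp.exists_norm_le_one_sum_mul_eq_of_ne_top (hp : p ≠ ∞) (hq : q ≠ ∞)
    [p.HolderConjugate q] (x : PiLp p (fun _ : ι => ℝ)) :
    ∃ w : PiLp q (fun _ : ι => ℝ), ‖w‖ ≤ 1 ∧ ∑ i, w i * x i = ‖x‖ := by
  obtain ⟨⟨g, hg, hgx⟩, -⟩ := NNReal.isGreatest_Lp Finset.univ (fun i => ‖x i‖₊)
    (ENNReal.HolderConjugate.toReal_of_ne_top hp hq)
  refine ⟨WithLp.toLp q fun i => SignType.sign (x i) * g i, ?_, ?_⟩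
  · rw [← coe_nnnorm, ← NNReal.coe_one, NNReal.coe_le_coe, PiLp.nnnorm_eq_sum hq]
    calc _ ≤ (∑ i, g i ^ q.toReal) ^ (1 / q.toReal) := by
          gcongr with i
          rw [← NNReal.coe_le_coe, coe_nnnorm, norm_mul, NNReal.norm_eq]
          exact mul_le_of_le_one_left (g i).2 (SignType.abs_coe_le_one _)
      _ ≤ 1 := NNReal.rpow_le_one hg (by positivity)
  · rw [← coe_nnnorm, PiLp.nnnorm_eq_sum hp, ← hgx]
    push_cast
    refine Finset.sum_congr rfl fun i _ => ?_
    rw [mul_right_comm, sign_mul_self, Real.norm_eq_abs]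

theorem PiLp.exists_norm_le_one_sum_mul_eq_of_eq_one (hp : p = 1) (hq : q = ∞)
    (x : PiLp p (fun _ : ι => ℝ)) :
    ∃ w : PiLp q (fun _ : ι => ℝ), ‖w‖ ≤ 1 ∧ ∑ i, w i * x i = ‖x‖ := by
  subst hp hq
  refine ⟨WithLp.toLp ∞ fun i => SignType.sign (x i), ?_, ?_⟩
  · rw [PiLp.norm_toLp]
    exact pi_norm_le_iff_of_nonneg zero_le_one |>.mpr fun i => SignType.abs_coe_le_one _
  · simp [PiLp.norm_eq_of_L1]

theorem PiLp.exists_norm_le_one_sum_mul_eq_of_eq_top (hp : p = ∞) (hq : q = 1)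
    (x : PiLp p (fun _ : ι => ℝ)) :
    ∃ w : PiLp q (fun _ : ι => ℝ), ‖w‖ ≤ 1 ∧ ∑ i, w i * x i = ‖x‖ := by
  subst hp hq
  classical
  cases isEmpty_or_nonempty ι
  · exact ⟨0, by simp, by simp [PiLp.norm_eq_ciSup]⟩
  obtain ⟨j, hj⟩ := exists_eq_ciSup_of_finite (f := fun i => ‖x i‖)
  refine ⟨PiLp.single 1 j (SignType.sign (x j) : ℝ), ?_, ?_⟩
  · rw [PiLp.norm_single]
    exact SignType.abs_coe_le_one _
  · simpa [PiLp.norm_eq_ciSup] using hj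

theorem PiLp.exists_norm_le_one_sum_mul_eq [p.HolderConjugate q] (x : PiLp p (fun _ : ι => ℝ)) :
    ∃ w : PiLp q (fun _ : ι => ℝ), ‖w‖ ≤ 1 ∧ ∑ i, w i * x i = ‖x‖ := by
  by_cases hp : p = ∞
  · exact exists_norm_le_one_sum_mul_eq_of_eq_top hp
      ((ENNReal.HolderConjugate.eq_top_iff_eq_one p q).mp hp) x
  by_cases hq : q = ∞
  · exact exists_norm_le_one_sum_mul_eq_of_eq_one
      ((ENNReal.HolderConjugate.eq_top_iff_eq_one q p).mp hq) hq x
  exact exists_norm_le_one_sum_mul_eq_of_ne_top hp hq x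

end Holder

section LpNorm

variable {m : ℕ}

theorem lpNorm_eq_norm_toLp (p : ℝ≥0∞) [Fact (1 ≤ p)] (y : Fin m → ℝ) :
    lpNorm p y = ‖WithLp.toLp p y‖ :=
  rfl

theorem convex_setOf_lpNorm_le (q : ℝ≥0∞) [Fact (1 ≤ q)] (r : ℝ) :
    Convex ℝ {y : EuclideanSpace ℝ (Fin m) | lpNorm q y ≤ r} := by
  let L := (WithLp.linearEquiv q ℝ (Fin m → ℝ)).symm.toLinearMap ∘ₗ
    (WithLp.linearEquiv 2 ℝ (Fin m → ℝ)).toLinearMap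
  have hset : {y : EuclideanSpace ℝ (Fin m) | lpNorm q y ≤ r} = L ⁻¹' Metric.closedBall 0 r := by
    ext y
    simp [L, lpNorm_eq_norm_toLp]
  rw [hset]
  exact (convex_closedBall 0 r).linear_preimage L

theorem isGreatest_inner_lpNorm_le_one {p q : ℝ≥0∞} [Fact (1 ≤ p)] [Fact (1 ≤ q)]
    [p.HolderConjugate q] (y : EuclideanSpace ℝ (Fin m)) :
    IsGreatest ((⟪·, y⟫_ℝ) '' {w | lpNorm q w ≤ 1}) (lpNorm p y) := by
  have hinner (w : EuclideanSpace ℝ (Fin m)) : ⟪w, y⟫_ℝ = ∑ i, w i * y i := by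
    simp [PiLp.inner_apply, mul_comm]
  constructor
  · obtain ⟨w, hw, hwy⟩ := PiLp.exists_norm_le_one_sum_mul_eq (q := q) (WithLp.toLp p y.ofLp)
    exact ⟨WithLp.toLp 2 w.ofLp, hw, by simpa [hinner, lpNorm_eq_norm_toLp] using hwy⟩
  · rintro _ ⟨w, hw, rfl⟩
    change ⟪w, y⟫_ℝ ≤ _
    rw [hinner w]
    exact (PiLp.sum_mul_le_norm_mul_norm (WithLp.toLp q w.ofLp) (WithLp.toLp p y.ofLp)).trans
      (mul_le_of_le_one_left (norm_nonneg _) hw)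

end LpNorm

/-- Moreau decomposition: `Prox_{τ⁻¹‖·‖_p}(û) = û − τ⁻¹·Π_{B_q}(τû)`, where `q` is the
conjugate exponent of `p` and `Π_{B_q}` is the Euclidean projection onto the unit
`ℓ_q`-ball. -/
theorem stmt_16 {m : ℕ} (p q : ℝ≥0∞) [Fact (1 ≤ p)] [Fact (1 ≤ q)]
    (hpq : 1 / p + 1 / q = 1) (τ : ℝ) (hτ : 0 < τ)
    (uhat : EuclideanSpace ℝ (Fin m))
    (Pi : EuclideanSpace ℝ (Fin m))
    (hPi1 : lpNorm q Pi ≤ 1)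
    (hPi2 : ∀ y : EuclideanSpace ℝ (Fin m), lpNorm q y ≤ 1 →
      ‖τ • uhat - Pi‖ ≤ ‖τ • uhat - y‖)
    (h : EuclideanSpace ℝ (Fin m) → ℝ)
    (hh : ∀ y, h y = τ⁻¹ * lpNorm p y + 1 / 2 * ‖y - uhat‖ ^ 2) :
    (∀ y, h (uhat - τ⁻¹ • Pi) ≤ h y) ∧
      ∀ z : EuclideanSpace ℝ (Fin m), (∀ y, h z ≤ h y) → z = uhat - τ⁻¹ • Pi := by
  have : p.HolderConjugate q := ENNReal.holderConjugate_iff.mpr (by simpa using hpq)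
  exact (convex_setOf_lpNorm_le q 1).moreau_decomposition isGreatest_inner_lpNorm_le_one hτ hPi1
    hPi2 h hh
end

section
/- Let m, n ∈ ℕ, p ∈ [1, ∞], A a real m×n matrix, b ∈ ℝᵐ, λ > 0, and 0 ≤ β < 1. Define f(x) := ‖Ax − b‖_p + λ(‖x‖₁ − β‖x‖₂). Then f is coercive: f(x) → +∞ as ‖x‖₂ → ∞ (equivalently, every sublevel set {x ∈ ℝⁿ : f(x) ≤ c}, c ∈ ℝ, is bounded). -/
open Filter Bornology
open scoped ENNReal

lemma norm_le_l1Norm {n : ℕ} (x : EuclideanSpace ℝ (Fin n)) : ‖x‖ ≤ l1Norm x := by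
  rw [EuclideanSpace.norm_eq, l1Norm]
  have h : ∑ i, x i ^ 2 ≤ (∑ i, |x i|) ^ 2 := by
    calc ∑ i, x i ^ 2 = ∑ i, |x i| ^ 2 := by simp [sq_abs]
    _ ≤ (∑ i, |x i|) ^ 2 := Finset.sum_sq_le_sq_sum_of_nonneg (fun _ _ => abs_nonneg _)
  calc Real.sqrt (∑ i, ‖x i‖ ^ 2) = Real.sqrt (∑ i, x i ^ 2) := by simp [Real.norm_eq_abs, sq_abs]
  _ ≤ Real.sqrt ((∑ i, |x i|) ^ 2) := Real.sqrt_le_sqrt h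
  _ = ∑ i, |x i| := Real.sqrt_sq (Finset.sum_nonneg fun _ _ => abs_nonneg _)

/-- Coercivity of `f(x) = ‖Ax − b‖_p + λ(‖x‖₁ − β‖x‖₂)` when `0 ≤ β < 1`. -/
theorem stmt_17 {m n : ℕ} (p : ℝ≥0∞) [Fact (1 ≤ p)]
    (A : Matrix (Fin m) (Fin n) ℝ) (b : Fin m → ℝ) (lam β : ℝ)
    (hlam : 0 < lam) (hβ0 : 0 ≤ β) (hβ1 : β < 1)
    (f : EuclideanSpace ℝ (Fin n) → ℝ)
    (hf : ∀ x, f x = lpNorm p (A.mulVec x - b) + lam * (l1Norm x - β * ‖x‖)) :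
    Tendsto f (cobounded (EuclideanSpace ℝ (Fin n))) atTop := by
  have hc : 0 < lam * (1 - β) := mul_pos hlam (by linarith)
  have h1 : Tendsto (fun x : EuclideanSpace ℝ (Fin n) => lam * (1 - β) * ‖x‖)
      (cobounded _) atTop :=
    (tendsto_norm_cobounded_atTop.const_mul_atTop hc)
  refine tendsto_atTop_mono (fun x => ?_) h1
  rw [hf x]
  have h2 : ‖x‖ ≤ l1Norm x := norm_le_l1Norm x
  have h3 : (0:ℝ) ≤ lpNorm p (A.mulVec x - b) := norm_nonneg _
  nlinarith [norm_nonneg x]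
end

section
/- Let m, n ∈ ℕ, p ∈ [1, ∞], A a real m×n matrix, b, b̃ ∈ ℝᵐ, λ > 0, β ≥ 0, σ > 0, τ ≥ 0, and v, xᵏ ∈ ℝⁿ. Then the function x ↦ ‖Ax − b‖_p + λ‖x‖₁ − λβ⟨v, x⟩ + (σ/2)‖x − xᵏ‖₂² + (τ/2)‖Ax − b̃‖₂² has exactly one global minimizer on ℝⁿ. -/
/-!
The objective is the sum of convex terms (a norm of an affine map, a weighted `ℓ₁`-norm, a linear
term and a squared norm of an affine map) and the `σ`-strongly convex proximal term
`σ / 2 * ‖x - xᵏ‖²`, so it is `σ`-strongly convex. In finite dimension a strongly convex function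
is continuous and grows quadratically at infinity, hence attains its infimum; strict convexity
makes the minimizer unique.
-/

open scoped ENNReal RealInnerProductSpace

open Set Filter Topology

section StrongConvexity

variable {E : Type*} [NormedAddCommGroup E] [NormedSpace ℝ E] {f g : E → ℝ} {m : ℝ} {s : Set E}

theorem ConvexOn.add_strongConvexOn (hf : ConvexOn ℝ s f) (hg : StrongConvexOn s m g) :
    StrongConvexOn s m (f + g) :=
  ((strongConvexOn_zero.mpr hf).add hg).mono fun r => by simp

theorem StrongConvexOn.add_convexOn (hf : StrongConvexOn s m f) (hg : ConvexOn ℝ s g) :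
    StrongConvexOn s m (f + g) :=
  (hf.add (strongConvexOn_zero.mpr hg)).mono fun r => by simp

theorem ConvexOn.continuous [FiniteDimensional ℝ E] (hf : ConvexOn ℝ univ f) : Continuous f :=
  continuousOn_univ.mp (hf.continuousOn isOpen_univ)

theorem StrongConvexOn.convexOn (hf : StrongConvexOn s m f) (hm : 0 ≤ m) : ConvexOn ℝ s f :=
  UniformConvexOn.convexOn hf fun r => by positivity

/-- Strong convexity between `0` and `x`, evaluated at the unit vector `‖x‖⁻¹ • x`, bounds `f x`
below by a quadratic in `‖x‖`. -/
theorem StrongConvexOn.tendsto_cocompact [FiniteDimensional ℝ E] (hf : StrongConvexOn univ m f)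
    (hm : 0 < m) : Tendsto f (cocompact E) atTop := by
  obtain ⟨c, hc⟩ := (isCompact_closedBall (0 : E) 1).bddBelow_image
    (hf.convexOn hm.le).continuous.continuousOn
  have hbound : ∀ x : E, 1 ≤ ‖x‖ →
      ‖x‖ * (m / 2 * ‖x‖ + (c - f 0 - m / 2)) + f 0 ≤ f x := by
    intro x hx
    set r := ‖x‖
    have hr : 0 < r := by linarith
    have hsphere : c ≤ f ((1 - r⁻¹) • (0 : E) + r⁻¹ • x) := by
      refine hc ⟨_, ?_, rfl⟩
      rw [smul_zero, zero_add, mem_closedBall_zero_iff, norm_smul, norm_inv, norm_norm,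
        inv_mul_cancel₀ hr.ne']
    have hconv := hf.2 (mem_univ 0) (mem_univ x) (sub_nonneg.mpr (inv_le_one_of_one_le₀ hx))
      (inv_nonneg.mpr hr.le) (sub_add_cancel 1 r⁻¹)
    simp only [zero_sub, norm_neg, smul_eq_mul] at hconv
    have := mul_le_mul_of_nonneg_left (hsphere.trans hconv) hr.le
    field_simp at this
    nlinarith
  have hg : Tendsto (fun r : ℝ => r * (m / 2 * r + (c - f 0 - m / 2)) + f 0) atTop atTop :=
    tendsto_atTop_add_const_right _ _ <| tendsto_id.atTop_mul_atTop₀ <|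
      tendsto_atTop_add_const_right _ _ <| tendsto_id.const_mul_atTop (half_pos hm)
  exact tendsto_atTop_mono' _ ((tendsto_norm_cocompact_atTop.eventually_ge_atTop 1).mono hbound)
    (hg.comp tendsto_norm_cocompact_atTop)

theorem StrongConvexOn.existsUnique_forall_le [FiniteDimensional ℝ E]
    (hf : StrongConvexOn univ m f) (hm : 0 < m) : ∃! x, ∀ y, f x ≤ f y := by
  obtain ⟨x, hx⟩ := (hf.convexOn hm.le).continuous.exists_forall_le
    (hf.tendsto_cocompact hm)
  exact ⟨x, hx, fun y hy => (hf.strictConvexOn hm).eq_of_isMinOn (isMinOn_univ_iff.mpr hy)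
    (isMinOn_univ_iff.mpr hx) (mem_univ y) (mem_univ x)⟩

theorem strongConvexOn_univ_half_mul_sq_norm_sub {F : Type*} [NormedAddCommGroup F]
    [InnerProductSpace ℝ F] (m : ℝ) (w : F) :
    StrongConvexOn univ m fun x => m / 2 * ‖x - w‖ ^ 2 := by
  rw [strongConvexOn_iff_convex]
  have haffine : (fun x => m / 2 * ‖x - w‖ ^ 2 - m / 2 * ‖x‖ ^ 2)
      = fun x => -m * ⟪w, x⟫ + m / 2 * ‖w‖ ^ 2 := by
    ext x
    rw [norm_sub_sq_real, real_inner_comm]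
    ring
  rw [haffine]
  exact ((-m • innerₛₗ ℝ w).convexOn convex_univ).add_const _

end StrongConvexity

theorem ConvexOn.comp_linearMap_sub {E F : Type*} [AddCommGroup E] [Module ℝ E] [AddCommGroup F]
    [Module ℝ F] {f : F → ℝ} (hf : ConvexOn ℝ univ f) (L : E →ₗ[ℝ] F) (w : F) :
    ConvexOn ℝ univ fun x => f (L x - w) :=
  hf.comp_affineMap (L.toAffineMap - AffineMap.const ℝ E w)

theorem convexOn_lpNorm (p : ℝ≥0∞) [Fact (1 ≤ p)] (m : ℕ) :
    ConvexOn ℝ univ (lpNorm p : (Fin m → ℝ) → ℝ) :=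
  convexOn_univ_norm.comp_linearMap (WithLp.linearEquiv p ℝ (Fin m → ℝ)).symm.toLinearMap

theorem l1Norm_eq_lpNorm_one {n : ℕ} (x : Fin n → ℝ) : l1Norm x = lpNorm 1 x := by
  simp [l1Norm, lpNorm, PiLp.norm_eq_of_L1]

theorem stmt_18_general {m n : ℕ} (p : ℝ≥0∞) [Fact (1 ≤ p)]
    (A : Matrix (Fin m) (Fin n) ℝ) (b btilde : Fin m → ℝ) (lam β σ τ : ℝ)
    (hlam : 0 < lam) (hσ : 0 < σ) (hτ : 0 ≤ τ)
    (v xk : EuclideanSpace ℝ (Fin n))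
    (F : EuclideanSpace ℝ (Fin n) → ℝ)
    (hF : ∀ x, F x = lpNorm p (A.mulVec x - b) + lam * l1Norm x - lam * β * ⟪v, x⟫
      + σ / 2 * ‖x - xk‖ ^ 2 + τ / 2 * l2Norm (A.mulVec x - btilde) ^ 2) :
    ∃! xbar : EuclideanSpace ℝ (Fin n), ∀ x, F xbar ≤ F x := by
  let toPi := (WithLp.linearEquiv 2 ℝ (Fin n → ℝ)).toLinearMap
  have hresidual : ConvexOn ℝ univ fun x : EuclideanSpace ℝ (Fin n) => lpNorm p (A.mulVec x - b) :=
    (convexOn_lpNorm p m).comp_linearMap_sub (A.mulVecLin ∘ₗ toPi) b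
  have hsparsity : ConvexOn ℝ univ fun x : EuclideanSpace ℝ (Fin n) => lam * l1Norm x := by
    simp only [l1Norm_eq_lpNorm_one]
    exact ((convexOn_lpNorm 1 n).comp_linearMap toPi).smul hlam.le
  have hlinear : ConcaveOn ℝ univ fun x : EuclideanSpace ℝ (Fin n) => lam * β * ⟪v, x⟫ :=
    ((lam * β) • innerₛₗ ℝ v).concaveOn convex_univ
  have hproximal : StrongConvexOn univ σ fun x => σ / 2 * ‖x - xk‖ ^ 2 :=
    strongConvexOn_univ_half_mul_sq_norm_sub σ xk
  have hleastSquares : ConvexOn ℝ univ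
      fun x : EuclideanSpace ℝ (Fin n) => τ / 2 * l2Norm (A.mulVec x - btilde) ^ 2 :=
    (((convexOn_lpNorm 2 m).pow (fun y _ => norm_nonneg _) 2).comp_linearMap_sub
      (A.mulVecLin ∘ₗ toPi) btilde).smul (by positivity)
  have hF_strong : StrongConvexOn univ σ F := by
    rw [show F = _ from funext hF]
    exact (((hresidual.add hsparsity).sub hlinear).add_strongConvexOn hproximal).add_convexOn
      hleastSquares
  exact hF_strong.existsUnique_forall_le hσ

/-- The strongly convex majorized subproblem has exactly one global minimizer. -/
theorem stmt_18 {m n : ℕ} (p : ℝ≥0∞) [Fact (1 ≤ p)]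
    (A : Matrix (Fin m) (Fin n) ℝ) (b btilde : Fin m → ℝ) (lam β σ τ : ℝ)
    (hlam : 0 < lam) (hβ : 0 ≤ β) (hσ : 0 < σ) (hτ : 0 ≤ τ)
    (v xk : EuclideanSpace ℝ (Fin n))
    (F : EuclideanSpace ℝ (Fin n) → ℝ)
    (hF : ∀ x, F x = lpNorm p (A.mulVec x - b) + lam * l1Norm x - lam * β * ⟪v, x⟫
      + σ / 2 * ‖x - xk‖ ^ 2 + τ / 2 * l2Norm (A.mulVec x - btilde) ^ 2) :
    ∃! xbar : EuclideanSpace ℝ (Fin n), ∀ x, F xbar ≤ F x :=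
  stmt_18_general p A b btilde lam β σ τ hlam hσ hτ v xk F hF
end
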